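/- arXiv:0803.2754 — 8 statements merged into one kernel-verified Lean document; each statement's English description precedes it below -/
import Mathlib

section
/- Let m ≥ 1 and let t₀, t₀′ ∈ ℝ^{m+1,1} be unit timelike vectors. Let x ∈ ℝ^{m+2} satisfy (x,x) = 1 and (x,t₀) = 0, and suppose (x+t₀, t₀′) ≠ 0. Define g(y) = −(y+t₀)/((y+t₀,t₀′)) − t₀′ on a neighbourhood of x. Then (g(x),g(x)) = 1, (g(x),t₀′) = 0, and for all u, w ∈ ℝ^{m+2} with (u,x) = (u,t₀) = (w,x) = (w,t₀) = 0, the Fréchet derivative of g at x satisfies (Dg(x)u, Dg(x)w) = (u,w)/(x+t₀,t₀′)². In other words, the map x ↦ −(x+t₀)/((x+t₀,t₀′)) − t₀′ is a conformal diffeomorphism from the sphere {x : (x,x)=1, (x,t₀)=0} (off the set where (x+t₀,t₀′)=0) to the sphere {x : (x,x)=1, (x,t₀′)=0}, with conformal factor 1/(x+t₀,t₀′)². -/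
/-- The Lorentzian bilinear form `(x,y) = xᵀ I_{m+1,1} y` on `ℝ^{m+2}`,
where `I_{m+1,1} = diag(1,…,1,−1)`. -/
noncomputable def lform (m : ℕ) (x y : Fin (m + 2) → ℝ) : ℝ :=
  ∑ i : Fin (m + 2), (if (i : ℕ) = m + 1 then (-1 : ℝ) else 1) * x i * y i

lemma lform_comm (m : ℕ) (x y : Fin (m + 2) → ℝ) : lform m x y = lform m y x := by
  unfold lform; apply Finset.sum_congr rfl; intro i _; ring

lemma lform_add_left (m : ℕ) (x y z : Fin (m + 2) → ℝ) :
    lform m (x + y) z = lform m x z + lform m y z := by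
  unfold lform; rw [← Finset.sum_add_distrib]
  apply Finset.sum_congr rfl; intro i _
  simp only [Pi.add_apply]; split_ifs <;> ring

lemma lform_smul_left (m : ℕ) (a : ℝ) (x z : Fin (m + 2) → ℝ) :
    lform m (a • x) z = a * lform m x z := by
  unfold lform; rw [Finset.mul_sum]
  apply Finset.sum_congr rfl; intro i _
  simp only [Pi.smul_apply, smul_eq_mul]; split_ifs <;> ring

lemma lform_sadd_left (m : ℕ) (a b : ℝ) (v w z : Fin (m + 2) → ℝ) :
    lform m (a • v + b • w) z = a * lform m v z + b * lform m w z := by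
  rw [lform_add_left, lform_smul_left, lform_smul_left]

lemma lform_expand (m : ℕ) (a b a' b' : ℝ) (v w v' w' : Fin (m + 2) → ℝ) :
    lform m (a • v + b • w) (a' • v' + b' • w') =
      a * a' * lform m v v' + a * b' * lform m v w' +
      b * a' * lform m w v' + b * b' * lform m w w' := by
  rw [lform_sadd_left, lform_comm m v (a' • v' + b' • w'),
    lform_comm m w (a' • v' + b' • w'), lform_sadd_left, lform_sadd_left,
    lform_comm m v' v, lform_comm m w' v, lform_comm m v' w, lform_comm m w' w]
  ring

/-- The map `x ↦ −(x+t₀)/((x+t₀,t₀′)) − t₀′` is a conformal diffeomorphism from the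
sphere `{x : (x,x)=1, (x,t₀)=0}` (off the set `(x+t₀,t₀′)=0`) to the sphere
`{x : (x,x)=1, (x,t₀′)=0}`, with conformal factor `1/(x+t₀,t₀′)²`. -/
theorem stmt0 (m : ℕ) (hm : 1 ≤ m) (t₀ t₀' : Fin (m + 2) → ℝ)
    (ht₀ : lform m t₀ t₀ = -1) (ht₀' : lform m t₀' t₀' = -1)
    (x : Fin (m + 2) → ℝ) (hx : lform m x x = 1) (hxt : lform m x t₀ = 0)
    (hden : lform m (x + t₀) t₀' ≠ 0)
    (g : (Fin (m + 2) → ℝ) → (Fin (m + 2) → ℝ))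
    (hg : ∀ y, g y = -(lform m (y + t₀) t₀')⁻¹ • (y + t₀) - t₀') :
    lform m (g x) (g x) = 1 ∧ lform m (g x) t₀' = 0 ∧
      ∀ u w : Fin (m + 2) → ℝ,
        lform m u x = 0 → lform m u t₀ = 0 → lform m w x = 0 → lform m w t₀ = 0 →
          lform m (fderiv ℝ g x u) (fderiv ℝ g x w) =
            lform m u w / (lform m (x + t₀) t₀') ^ 2 := by
  have htx : lform m t₀ x = 0 := by rw [lform_comm]; exact hxt
  have hpp : lform m (x + t₀) (x + t₀) = 0 := by
    rw [lform_add_left, lform_comm m x (x + t₀), lform_comm m t₀ (x + t₀),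
      lform_add_left, lform_add_left, hx, ht₀, hxt, htx]
    ring
  have hgx : g x = (-(lform m (x + t₀) t₀')⁻¹) • (x + t₀) + (-1 : ℝ) • t₀' := by
    rw [hg x]; module
  refine ⟨?_, ?_, ?_⟩
  · have := lform_expand m (-(lform m (x + t₀) t₀')⁻¹) (-1)
      (-(lform m (x + t₀) t₀')⁻¹) (-1) (x + t₀) t₀' (x + t₀) t₀'
    rw [hgx, this, hpp, ht₀', lform_comm m t₀' (x + t₀)]
    field_simp
    ring
  · rw [hgx, lform_sadd_left, ht₀']
    field_simp
    ring
  · intro u w hux hut hwx hwt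
    have hup : lform m u (x + t₀) = 0 := by
      rw [lform_comm, lform_add_left, lform_comm m x u, lform_comm m t₀ u, hux, hut]; ring
    have hwp : lform m w (x + t₀) = 0 := by
      rw [lform_comm, lform_add_left, lform_comm m x w, lform_comm m t₀ w, hwx, hwt]; ring
    set c : ℝ := lform m (x + t₀) t₀' with hcdef
    let L : (Fin (m + 2) → ℝ) →ₗ[ℝ] ℝ :=
      { toFun := fun y => lform m y t₀'
        map_add' := fun y z => lform_add_left m y z t₀'
        map_smul' := fun a y => lform_smul_left m a y t₀' }
    let clm : (Fin (m + 2) → ℝ) →L[ℝ] ℝ := LinearMap.toContinuousLinearMap L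
    have hclm : ∀ y, clm y = lform m y t₀' := fun y => rfl
    have hcd : HasFDerivAt (fun y : Fin (m + 2) → ℝ => lform m (y + t₀) t₀') clm x := by
      have h1 : (fun y : Fin (m + 2) → ℝ => lform m (y + t₀) t₀') =
          fun y => clm y + lform m t₀ t₀' := by
        funext y; rw [hclm, lform_add_left]
      rw [h1]
      exact (clm.hasFDerivAt).add_const _
    have hinv : HasFDerivAt (fun y : Fin (m + 2) → ℝ => (lform m (y + t₀) t₀')⁻¹)
        (-((c ^ 2)⁻¹ • clm)) x := by
      have := (hasDerivAt_inv (x := c) hden).comp_hasFDerivAt x hcd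
      simp only [Function.comp_def, neg_smul] at this
      exact this
    have hneg := hinv.neg
    have hid : HasFDerivAt (fun y : Fin (m + 2) → ℝ => y + t₀)
        (ContinuousLinearMap.id ℝ (Fin (m + 2) → ℝ)) x :=
      (hasFDerivAt_id x).add_const t₀
    have h2 := (hneg.smul hid).sub_const t₀'
    have hg' : g = fun y => -(lform m (y + t₀) t₀')⁻¹ • (y + t₀) - t₀' := funext hg
    have hD : HasFDerivAt g
        ((-c⁻¹) • ContinuousLinearMap.id ℝ (Fin (m + 2) → ℝ) +
          ((c ^ 2)⁻¹ • clm).smulRight (x + t₀)) x := by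
      rw [hg']
      rw [neg_neg] at h2
      exact h2
    have happ : ∀ v : Fin (m + 2) → ℝ, fderiv ℝ g x v =
        (-(c⁻¹)) • v + ((c ^ 2)⁻¹ * lform m v t₀') • (x + t₀) := by
      intro v
      rw [hD.fderiv]
      simp [ContinuousLinearMap.add_apply, ContinuousLinearMap.smul_apply,
        ContinuousLinearMap.smulRight_apply, hclm, smul_smul]
    rw [happ u, happ w, lform_expand, hpp, hup, lform_comm m (x + t₀) w, hwp]
    field_simp
    ring
end

section
/- Let Ξ : ℝ^n → 𝔭 be a smooth map of the form Ξ(x) = [[0, ξ(x)ᵀJ],[−ξ(x), 0]] with ξ(x)_{ii} = 0 for all i, and for λ ∈ ℝ set θ_{λ,i}(x) = λ a_i + [a_i, Ξ(x)]. Then the following are equivalent: (1) for all i ≠ j, [a_i, ∂Ξ/∂x_j] − [a_j, ∂Ξ/∂x_i] − [[a_i,Ξ],[a_j,Ξ]] = 0 (i.e. Ξ is a solution of the U/K-system); (2) for every λ ∈ ℝ and all i, j, the zero-curvature equation ∂θ_{λ,j}/∂x_i − ∂θ_{λ,i}/∂x_j + [θ_{λ,i}, θ_{λ,j}] = 0 holds;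 (3) there exists λ ∈ ℝ∖{0} for which the zero-curvature equation in (2) holds for all i, j. -/
open Matrix

noncomputable section

/-- Index type for `2n×2n` matrices in `n×n` block form. -/
abbrev Idx (n : ℕ) := Fin n ⊕ Fin n

/-- `J = I_{n−1,1} = diag(1,…,1,−1)`, an `n×n` matrix. -/
def Jm (n : ℕ) : Matrix (Fin n) (Fin n) ℝ :=
  Matrix.diagonal fun i => if (i : ℕ) + 1 = n then -1 else 1

/-- `a_i = [[0, e_{ii}J],[−e_{ii}, 0]]`. -/
def aM (n : ℕ) (i : Fin n) : Matrix (Idx n) (Idx n) ℝ :=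
  Matrix.fromBlocks 0 (Matrix.single i i 1 * Jm n)
    (-(Matrix.single i i 1)) 0

/-- Matrix commutator `[A,B] = AB − BA`. -/
def lieb {m : Type*} [Fintype m] (A B : Matrix m m ℝ) : Matrix m m ℝ := A * B - B * A

/-- Entrywise partial derivative `∂f/∂x_i` of a matrix-valued map on `ℝ^n`. -/
def pdM {n : ℕ} {m : Type*} (f : (Fin n → ℝ) → Matrix m m ℝ) (i : Fin n)
    (x : Fin n → ℝ) : Matrix m m ℝ :=
  Matrix.of fun a b => fderiv ℝ (fun y => f y a b) x (Pi.single i 1)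

/-- The `𝔭`-valued map `Ξ = [[0, ξᵀJ],[−ξ, 0]]` built from `ξ : ℝ^n → gl(n,ℝ)`. -/
def XiM (n : ℕ) (ξ : (Fin n → ℝ) → Matrix (Fin n) (Fin n) ℝ) (x : Fin n → ℝ) :
    Matrix (Idx n) (Idx n) ℝ :=
  Matrix.fromBlocks 0 ((ξ x)ᵀ * Jm n) (-(ξ x)) 0

/-- `Ξ` (given by `ξ` with zero diagonal, smooth) is a solution of the U/K-system. -/
def IsUKSolution (n : ℕ) (ξ : (Fin n → ℝ) → Matrix (Fin n) (Fin n) ℝ) : Prop :=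
  (∀ i j : Fin n, ContDiff ℝ (⊤ : ℕ∞) fun x => ξ x i j) ∧
  (∀ x i, ξ x i i = 0) ∧
  (∀ (x : Fin n → ℝ) (i j : Fin n), i ≠ j →
    lieb (aM n i) (pdM (XiM n ξ) j x) - lieb (aM n j) (pdM (XiM n ξ) i x)
      - lieb (lieb (aM n i) (XiM n ξ x)) (lieb (aM n j) (XiM n ξ x)) = 0)

/-- The Lax-pair coefficient `θ_{λ,i}(x) = λ a_i + [a_i, Ξ(x)]`. -/
def theta (n : ℕ) (ξ : (Fin n → ℝ) → Matrix (Fin n) (Fin n) ℝ) (lam : ℝ)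
    (i : Fin n) (x : Fin n → ℝ) : Matrix (Idx n) (Idx n) ℝ :=
  lam • aM n i + lieb (aM n i) (XiM n ξ x)

-- Auxiliary lemmas


lemma stdJ (n : ℕ) (i : Fin n) :
    Matrix.single i i (1:ℝ) * Jm n
      = (if (i : ℕ) + 1 = n then (-1:ℝ) else 1) • Matrix.single i i 1 := by
  ext a b
  simp only [Jm, Matrix.mul_diagonal, Matrix.smul_apply, smul_eq_mul,
    Matrix.single, Matrix.of_apply]
  by_cases h : a = i ∧ b = i
  · obtain ⟨h1, h2⟩ := h; subst h1; subst h2; simp [mul_comm]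
  · have haux : ¬(i = a ∧ i = b) := fun ⟨p, q⟩ => h ⟨p.symm, q.symm⟩
    simp [haux]

lemma aM_mul_aM (n : ℕ) (i j : Fin n) (h : i ≠ j) : aM n i * aM n j = 0 := by
  have hE : Matrix.single i i (1:ℝ) * Matrix.single j j 1 = 0 :=
    by simp [h]
  unfold aM
  rw [Matrix.fromBlocks_multiply]
  rw [stdJ n i, stdJ n j]
  simp [Matrix.smul_mul, Matrix.mul_smul, hE, Matrix.fromBlocks_zero]

lemma lieb_aM (n : ℕ) (i j : Fin n) : lieb (aM n i) (aM n j) = 0 := by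
  by_cases h : i = j
  · subst h; simp [lieb]
  · simp [lieb, aM_mul_aM n i j h, aM_mul_aM n j i (Ne.symm h)]

lemma lieb_jacobi {m : Type*} [Fintype m] (A B C : Matrix m m ℝ) :
    lieb A (lieb B C) - lieb B (lieb A C) = lieb (lieb A B) C := by
  simp only [lieb]
  noncomm_ring

lemma lieb_expand {m : Type*} [Fintype m] (lam : ℝ) (A B C D : Matrix m m ℝ) :
    lieb (lam • A + C) (lam • B + D)
      = (lam * lam) • lieb A B + lam • lieb A D + lam • lieb C B + lieb C D := by
  simp only [lieb, add_mul, mul_add, Matrix.smul_mul, Matrix.mul_smul, smul_sub, smul_smul]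
  abel

lemma xiM_diff {n : ℕ} {ξ : (Fin n → ℝ) → Matrix (Fin n) (Fin n) ℝ}
    (hsm : ∀ i j : Fin n, ContDiff ℝ (⊤ : ℕ∞) fun x => ξ x i j) (a b : Idx n) :
    Differentiable ℝ fun y => XiM n ξ y a b := by
  rcases a with a | a <;> rcases b with b | b <;>
    simp only [XiM, Matrix.fromBlocks_apply₁₁, Matrix.fromBlocks_apply₁₂,
      Matrix.fromBlocks_apply₂₁, Matrix.fromBlocks_apply₂₂, Matrix.zero_apply,
      Matrix.mul_apply, Matrix.transpose_apply, Matrix.neg_apply]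
  · exact differentiable_const 0
  · exact Differentiable.fun_sum fun c _ =>
      (((hsm c a).differentiable (by simp))).mul_const _
  · exact (((hsm a b).differentiable (by simp))).neg
  · exact differentiable_const 0

lemma pdM_const_add_lieb {n : ℕ} {m : Type*} [Fintype m] (K A : Matrix m m ℝ)
    (f : (Fin n → ℝ) → Matrix m m ℝ) (hf : ∀ a b, Differentiable ℝ fun y => f y a b)
    (i : Fin n) (x : Fin n → ℝ) :
    pdM (fun y => K + lieb A (f y)) i x = lieb A (pdM f i x) := by
  ext a b
  have h1 : ∀ c : m, DifferentiableAt ℝ (fun y => A a c * f y c b) x :=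
    fun c => ((hf c b).const_mul _).differentiableAt
  have h2 : ∀ c : m, DifferentiableAt ℝ (fun y => f y a c * A c b) x :=
    fun c => ((hf a c).mul_const _).differentiableAt
  have hs1 : DifferentiableAt ℝ (fun y => ∑ c, A a c * f y c b) x :=
    DifferentiableAt.fun_sum fun c _ => h1 c
  have hs2 : DifferentiableAt ℝ (fun y => ∑ c, f y a c * A c b) x :=
    DifferentiableAt.fun_sum fun c _ => h2 c
  simp only [pdM, Matrix.of_apply, lieb, Matrix.sub_apply, Matrix.add_apply, Matrix.mul_apply]
  rw [fderiv_const_add, fderiv_fun_sub hs1 hs2,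
    fderiv_fun_sum (fun c _ => h1 c), fderiv_fun_sum (fun c _ => h2 c)]
  simp only [ContinuousLinearMap.sub_apply, ContinuousLinearMap.sum_apply]
  congr 1
  · refine Finset.sum_congr rfl fun c _ => ?_
    rw [fderiv_const_mul ((hf c b).differentiableAt) (A a c)]
    simp
  · refine Finset.sum_congr rfl fun c _ => ?_
    rw [fderiv_mul_const ((hf a c).differentiableAt) (A c b)]
    simp [mul_comm]

lemma curv_eq {n : ℕ} {ξ : (Fin n → ℝ) → Matrix (Fin n) (Fin n) ℝ}
    (hsm : ∀ i j : Fin n, ContDiff ℝ (⊤ : ℕ∞) fun x => ξ x i j)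
    (lam : ℝ) (x : Fin n → ℝ) (i j : Fin n) :
    pdM (theta n ξ lam j) i x - pdM (theta n ξ lam i) j x
        + lieb (theta n ξ lam i x) (theta n ξ lam j x)
      = -(lieb (aM n i) (pdM (XiM n ξ) j x) - lieb (aM n j) (pdM (XiM n ξ) i x)
          - lieb (lieb (aM n i) (XiM n ξ x)) (lieb (aM n j) (XiM n ξ x))) := by
  have hp1 : pdM (theta n ξ lam j) i x = lieb (aM n j) (pdM (XiM n ξ) i x) :=
    pdM_const_add_lieb (lam • aM n j) (aM n j) _ (xiM_diff hsm) i x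
  have hp2 : pdM (theta n ξ lam i) j x = lieb (aM n i) (pdM (XiM n ξ) j x) :=
    pdM_const_add_lieb (lam • aM n i) (aM n i) _ (xiM_diff hsm) j x
  rw [hp1, hp2]
  unfold theta
  rw [lieb_expand]
  have hjac : lieb (aM n i) (lieb (aM n j) (XiM n ξ x))
      - lieb (aM n j) (lieb (aM n i) (XiM n ξ x)) = 0 := by
    rw [lieb_jacobi, lieb_aM]
    simp [lieb]
  have hCB : lieb (lieb (aM n i) (XiM n ξ x)) (aM n j)
      = -(lieb (aM n j) (lieb (aM n i) (XiM n ξ x))) := by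
    simp only [lieb]; noncomm_ring
  rw [lieb_aM, hCB]
  rw [sub_eq_zero.mp hjac]
  simp only [smul_zero, smul_neg]
  abel


/-- Equivalence of: (1) the U/K-system for `Ξ`; (2) flatness (zero-curvature) of
`θ_λ` for every real `λ`; (3) flatness of `θ_λ` for some nonzero real `λ`. -/
theorem stmt6 (n : ℕ) (hn : 2 ≤ n)
    (ξ : (Fin n → ℝ) → Matrix (Fin n) (Fin n) ℝ)
    (hsm : ∀ i j : Fin n, ContDiff ℝ (⊤ : ℕ∞) fun x => ξ x i j)
    (hdiag : ∀ x i, ξ x i i = 0) :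
    ((∀ (x : Fin n → ℝ) (i j : Fin n), i ≠ j →
        lieb (aM n i) (pdM (XiM n ξ) j x) - lieb (aM n j) (pdM (XiM n ξ) i x)
          - lieb (lieb (aM n i) (XiM n ξ x)) (lieb (aM n j) (XiM n ξ x)) = 0) ↔
      (∀ (lam : ℝ) (x : Fin n → ℝ) (i j : Fin n),
        pdM (theta n ξ lam j) i x - pdM (theta n ξ lam i) j x
          + lieb (theta n ξ lam i x) (theta n ξ lam j x) = 0)) ∧
    ((∀ (lam : ℝ) (x : Fin n → ℝ) (i j : Fin n),
        pdM (theta n ξ lam j) i x - pdM (theta n ξ lam i) j x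
          + lieb (theta n ξ lam i x) (theta n ξ lam j x) = 0) ↔
      (∃ lam : ℝ, lam ≠ 0 ∧ ∀ (x : Fin n → ℝ) (i j : Fin n),
        pdM (theta n ξ lam j) i x - pdM (theta n ξ lam i) j x
          + lieb (theta n ξ lam i x) (theta n ξ lam j x) = 0)) := by
  have key := curv_eq hsm
  constructor
  · constructor
    · intro h lam x i j
      rw [key]
      by_cases hij : i = j
      · subst hij; simp [lieb]
      · rw [h x i j hij, neg_zero]
    · intro h x i j hij
      have h1 := h 1 x i j
      rw [key] at h1
      exact neg_eq_zero.mp h1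
  · constructor
    · intro h
      exact ⟨1, one_ne_zero, h 1⟩
    · rintro ⟨lam0, -, h⟩ lam x i j
      rw [key]
      have h1 := h x i j
      rw [key] at h1
      exact h1

end
end

section
/- Let Ξ : ℝ^n → 𝔭 be a solution of the U/K-system, with frames Φ₁ and Φ₀ = diag(g₁,g₂) as above. Let b, c ∈ ℝ^n be nonzero with bᵀJb = 0 and cᵀJc = 0, set p(x) = g₂(x)^{−1}b, q(x) = g₂(x)^{−1}c, and define F_b(x) = Φ₁(x)·(0_n ; p(x)), F_c(x) = Φ₁(x)·(0_n ; q(x)). Then for all x and all 1 ≤ i ≤ n: p_i(x)·∂F_c/∂x_i(x) = q_i(x)·∂F_b/∂x_i(x). In particular, at each point the i-th coordinate directions ∂F_b/∂x_i and ∂F_c/∂x_i are parallel, so x ↦ F_b(x) is a Combescure transform of x ↦ F_c(x). -/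
open Matrix

noncomputable section

/-- `I_{2n−1,1} = diag(1,…,1,−1)` in block form. -/
def ImR (n : ℕ) : Matrix (Idx n) (Idx n) ℝ := Matrix.fromBlocks 1 0 0 (Jm n)

/-- The diagonal entries of `I_{2n−1,1}`. -/
def etaR (n : ℕ) : Idx n → ℝ :=
  Sum.elim (fun _ => 1) (fun i => if (i : ℕ) + 1 = n then -1 else 1)

/-- The bilinear form `(x,y) = xᵀ I_{2n−1,1} y` on `ℝ^{2n}`. -/
def formR (n : ℕ) (x y : Idx n → ℝ) : ℝ := ∑ a, etaR n a * x a * y a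

/-- `ε_i = J_{ii}` (so `ε_i = 1` for `i < n`, `ε_n = −1`). -/
def eps (n : ℕ) (i : Fin n) : ℝ := if (i : ℕ) + 1 = n then -1 else 1

/-- Entrywise partial derivative `∂f/∂x_i` of a vector-valued map on `ℝ^n`. -/
def pdV {n : ℕ} {m : Type*} (f : (Fin n → ℝ) → m → ℝ) (i : Fin n)
    (x : Fin n → ℝ) : m → ℝ :=
  fun a => fderiv ℝ (fun y => f y a) x (Pi.single i 1)

/-- `Φ` is the frame for `Ξ` at spectral parameter `λ`: smooth, `Φ(0) = I`, and
`∂Φ/∂x_i = Φ·(λ a_i + [a_i, Ξ])`. -/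
def IsFrame (n : ℕ) (ξ : (Fin n → ℝ) → Matrix (Fin n) (Fin n) ℝ) (lam : ℝ)
    (Φ : (Fin n → ℝ) → Matrix (Idx n) (Idx n) ℝ) : Prop :=
  (∀ a b : Idx n, ContDiff ℝ (⊤ : ℕ∞) fun x => Φ x a b) ∧ Φ 0 = 1 ∧
  ∀ (x : Fin n → ℝ) (i : Fin n),
    pdM Φ i x = Φ x * (lam • aM n i + lieb (aM n i) (XiM n ξ x))


section UKAux

variable {n : ℕ}

lemma Jm_mul_Jm (n : ℕ) : Jm n * Jm n = 1 := by
  rw [Jm, Matrix.diagonal_mul_diagonal]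
  have h : (fun i : Fin n => (if (i:ℕ)+1=n then (-1:ℝ) else 1) * (if (i:ℕ)+1=n then -1 else 1)) = fun _ => 1 := by
    funext i; split_ifs <;> norm_num
  rw [h, Matrix.diagonal_one]

lemma Jm_transpose (n : ℕ) : (Jm n)ᵀ = Jm n := Matrix.diagonal_transpose _

lemma pdV_mulVec {m : Type*} [Fintype m]
    (f : (Fin n → ℝ) → Matrix m m ℝ) (g : (Fin n → ℝ) → m → ℝ) (i : Fin n) (x : Fin n → ℝ)
    (hf : ∀ a b, DifferentiableAt ℝ (fun y => f y a b) x)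
    (hg : ∀ a, DifferentiableAt ℝ (fun y => g y a) x) :
    pdV (fun y => f y *ᵥ g y) i x = pdM f i x *ᵥ g x + f x *ᵥ pdV g i x := by
  funext a
  have h1 : (fun y => (f y *ᵥ g y) a) = fun y => ∑ k, f y a k * g y k := by
    funext y; simp [Matrix.mulVec, dotProduct]
  have h2 : ∀ k, (fderiv ℝ (fun y => f y a k * g y k) x) (Pi.single i 1)
      = f x a k * pdV g i x k + g x k * pdM f i x a k := by
    intro k
    rw [fderiv_fun_mul (hf a k) (hg k)]
    simp [pdV, pdM]
  simp only [pdV, h1]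
  rw [fderiv_fun_sum (A := fun k y => f y a k * g y k) (fun k _ => (hf a k).mul (hg k))]
  simp only [ContinuousLinearMap.coe_sum', Finset.sum_apply, h2, Pi.add_apply,
    Matrix.mulVec, dotProduct, Finset.sum_add_distrib, pdV, pdM, Matrix.of_apply]
  rw [add_comm]
  congr 1
  exact Finset.sum_congr rfl fun k _ => by ring

lemma lieb_aM_s9 (i : Fin n) (A : Matrix (Fin n) (Fin n) ℝ) :
    lieb (aM n i) (Matrix.fromBlocks 0 (Aᵀ * Jm n) (-A) 0) =
      Matrix.fromBlocks
        (Aᵀ * Jm n * Matrix.single i i 1 - Matrix.single i i 1 * Jm n * A) 0 0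
        (A * Matrix.single i i 1 * Jm n - Matrix.single i i 1 * Aᵀ * Jm n) := by
  ext a c
  rcases a with a|a <;> rcases c with c|c <;>
    simp [lieb, aM, Matrix.fromBlocks_multiply, Matrix.sub_apply, Matrix.mul_assoc] <;> abel

lemma stdJ_mulVec (i : Fin n) (v : Fin n → ℝ) :
    (Matrix.single i i 1 * Jm n) *ᵥ v = (eps n i * v i) • (Pi.single i 1 : Fin n → ℝ) := by
  funext j
  simp only [Matrix.mulVec, dotProduct, Jm, Matrix.mul_diagonal, Pi.smul_apply,
    smul_eq_mul, Pi.single_apply, Matrix.single, Matrix.of_apply, eps]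
  rw [Finset.sum_eq_single i]
  · by_cases hj : j = i
    · simp only [hj, and_self, if_true, eq_self_iff_true]
      split_ifs <;> ring
    · simp [hj, Ne.symm hj]
  · intro k _ hk
    simp [Ne.symm hk]
  · simp

lemma key_deriv (n : ℕ)
    (ξ : (Fin n → ℝ) → Matrix (Fin n) (Fin n) ℝ)
    (Φ₁ : (Fin n → ℝ) → Matrix (Idx n) (Idx n) ℝ) (hΦ₁ : IsFrame n ξ 1 Φ₁)
    (g₁ g₂ : (Fin n → ℝ) → Matrix (Fin n) (Fin n) ℝ)
    (hΦ₀ : IsFrame n ξ 0 (fun x => Matrix.fromBlocks (g₁ x) 0 0 (g₂ x)))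
    (hg₂ : ∀ x, (g₂ x)ᵀ * Jm n * g₂ x = Jm n)
    (b : Fin n → ℝ) (p : (Fin n → ℝ) → Fin n → ℝ) (hp : ∀ x, p x = (g₂ x)⁻¹ *ᵥ b)
    (F : (Fin n → ℝ) → Idx n → ℝ)
    (hF : ∀ x, F x = Φ₁ x *ᵥ Sum.elim (0 : Fin n → ℝ) (p x)) :
    ∀ (x : Fin n → ℝ) (i : Fin n),
      pdV F i x = (eps n i * p x i) • (Φ₁ x *ᵥ Sum.elim (Pi.single i 1) (0 : Fin n → ℝ)) := by
  obtain ⟨hΦ₁s, -, hΦ₁d⟩ := hΦ₁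
  obtain ⟨hΦ₀s, -, hΦ₀d⟩ := hΦ₀
  -- g₂ inverse formula
  have hg₂inv : ∀ x, (g₂ x)⁻¹ = Jm n * (g₂ x)ᵀ * Jm n := by
    intro x
    refine Matrix.inv_eq_left_inv ?_
    rw [Matrix.mul_assoc, Matrix.mul_assoc, ← Matrix.mul_assoc ((g₂ x)ᵀ), hg₂ x, Jm_mul_Jm]
  -- entries of g₂ are differentiable
  have hg₂diff : ∀ (x : Fin n → ℝ) (a c : Fin n), DifferentiableAt ℝ (fun y => g₂ y a c) x := by
    intro x a c
    have h := (hΦ₀s (Sum.inr a) (Sum.inr c)).differentiable (by simp) x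
    simpa [Matrix.fromBlocks_apply₂₂] using h
  -- explicit entry formula for p
  have hpE : ∀ (a : Fin n), (fun y => p y a)
      = fun y => (if (a:ℕ)+1=n then (-1:ℝ) else 1) * ∑ k, g₂ y k a * (Jm n *ᵥ b) k := by
    intro a
    funext y
    rw [hp y, hg₂inv y]
    rw [← Matrix.mulVec_mulVec, ← Matrix.mulVec_mulVec, Jm, Matrix.mulVec_diagonal]
    simp only [Matrix.mulVec, dotProduct, Matrix.transpose_apply]
    try split_ifs <;> try ring
  -- differentiability of p entries
  have hpdiff : ∀ (x : Fin n → ℝ) (a : Fin n), DifferentiableAt ℝ (fun y => p y a) x := by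
    intro x a
    rw [hpE a]
    exact ((DifferentiableAt.fun_sum fun k _ => (hg₂diff x k a).mul_const _).const_mul _)
  -- derivative of p entries
  have hpd : ∀ (x : Fin n → ℝ) (i : Fin n),
      pdV p i x = Jm n *ᵥ ((pdM g₂ i x)ᵀ *ᵥ (Jm n *ᵥ b)) := by
    intro x i
    funext a
    simp only [pdV]
    rw [hpE a]
    have hterm : ∀ k : Fin n, (fderiv ℝ (fun y => g₂ y k a * (Jm n *ᵥ b) k) x) (Pi.single i 1)
        = (fderiv ℝ (fun y => g₂ y k a) x) (Pi.single i 1) * (Jm n *ᵥ b) k := by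
      intro k
      rw [fderiv_mul_const (hg₂diff x k a)]
      simp [mul_comm]
    rw [fderiv_const_mul (DifferentiableAt.fun_sum fun k _ => (hg₂diff x k a).mul_const _)]
    rw [fderiv_fun_sum (fun k _ => (hg₂diff x k a).mul_const _)]
    simp only [ContinuousLinearMap.smul_apply, ContinuousLinearMap.coe_sum',
      Finset.sum_apply, smul_eq_mul]
    rw [Finset.sum_congr rfl fun k _ => hterm k]
    have hdg : ((Jm n) *ᵥ ((pdM g₂ i x)ᵀ *ᵥ (Jm n *ᵥ b))) a
        = (if (a:ℕ)+1 = n then (-1:ℝ) else 1) * ((pdM g₂ i x)ᵀ *ᵥ (Jm n *ᵥ b)) a := by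
      rw [Jm, Matrix.mulVec_diagonal]
    rw [hdg]
    congr 1
  -- transpose of E
  have hET : ∀ i : Fin n, (Matrix.single i i (1:ℝ))ᵀ = Matrix.single i i 1 := by
    intro i
    ext a c
    simp [Matrix.single, Matrix.transpose_apply, and_comm]
  -- derivative of g₂
  have hg₂d : ∀ (x : Fin n → ℝ) (i : Fin n),
      pdM g₂ i x = g₂ x * (ξ x * Matrix.single i i 1 * Jm n
        - Matrix.single i i 1 * (ξ x)ᵀ * Jm n) := by
    intro x i
    have h := hΦ₀d x i
    rw [zero_smul, zero_add, show XiM n ξ x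
      = Matrix.fromBlocks 0 ((ξ x)ᵀ * Jm n) (-(ξ x)) 0 from rfl, lieb_aM_s9 i (ξ x)] at h
    funext a c
    have h2 := congrFun (congrFun h (Sum.inr a)) (Sum.inr c)
    simp only [pdM, Matrix.of_apply, Matrix.fromBlocks_multiply, Matrix.fromBlocks_apply₂₂,
      Matrix.mul_zero, Matrix.zero_mul, add_zero, zero_add] at h2 ⊢
    exact h2
  -- main computation
  intro x i
  have hβT : Jm n * (ξ x * Matrix.single i i 1 * Jm n
      - Matrix.single i i 1 * (ξ x)ᵀ * Jm n)ᵀ * Jm n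
      = -(ξ x * Matrix.single i i 1 * Jm n
      - Matrix.single i i 1 * (ξ x)ᵀ * Jm n) := by
    simp only [Matrix.transpose_sub, Matrix.transpose_mul, Jm_transpose, hET i,
      Matrix.transpose_transpose, Matrix.mul_sub, Matrix.sub_mul, Matrix.mul_assoc]
    rw [← Matrix.mul_assoc (Jm n) (Jm n), Jm_mul_Jm, Matrix.one_mul,
      ← Matrix.mul_assoc (Jm n) (Jm n), Jm_mul_Jm, Matrix.one_mul]
    abel
  have hpd2 : pdV p i x = -((ξ x * Matrix.single i i 1 * Jm n
      - Matrix.single i i 1 * (ξ x)ᵀ * Jm n) *ᵥ p x) := by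
    rw [hpd x i, hg₂d x i, Matrix.mulVec_mulVec, Matrix.mulVec_mulVec]
    have hmat : Jm n * (g₂ x * (ξ x * Matrix.single i i 1 * Jm n
        - Matrix.single i i 1 * (ξ x)ᵀ * Jm n))ᵀ * Jm n
        = (-(ξ x * Matrix.single i i 1 * Jm n
        - Matrix.single i i 1 * (ξ x)ᵀ * Jm n)) * (g₂ x)⁻¹ := by
      rw [Matrix.transpose_mul, hg₂inv x, ← hβT]
      simp only [Matrix.mul_assoc]
      rw [← Matrix.mul_assoc (Jm n) (Jm n), Jm_mul_Jm, Matrix.one_mul]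
    rw [hmat, ← Matrix.mulVec_mulVec, ← hp x, Matrix.neg_mulVec]
  -- derivative of F
  have hFfun : F = fun y => Φ₁ y *ᵥ Sum.elim (0 : Fin n → ℝ) (p y) := funext hF
  rw [hFfun, pdV_mulVec Φ₁ (fun y => Sum.elim (0 : Fin n → ℝ) (p y)) i x
    (fun a c => ((hΦ₁s a c).differentiable (by simp)).differentiableAt)
    (by rintro (a | a)
        · simp only [Sum.elim_inl, Pi.zero_apply]
          exact differentiableAt_const 0
        · exact hpdiff x a)]
  have hgd : pdV (fun y => Sum.elim (0 : Fin n → ℝ) (p y)) i x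
      = Sum.elim (0 : Fin n → ℝ) (pdV p i x) := by
    funext a
    rcases a with a | a <;> simp [pdV]
  rw [hgd, hpd2, hΦ₁d x i, one_smul, ← Matrix.mulVec_mulVec, Matrix.add_mulVec,
    show XiM n ξ x = Matrix.fromBlocks 0 ((ξ x)ᵀ * Jm n) (-(ξ x)) 0 from rfl, lieb_aM_s9 i (ξ x),
    aM, Matrix.fromBlocks_mulVec, Matrix.fromBlocks_mulVec]
  rw [← Matrix.mulVec_add]
  simp only [Sum.elim_comp_inl, Sum.elim_comp_inr]
  have hvec : (Sum.elim ((0 : Matrix (Fin n) (Fin n) ℝ) *ᵥ (0 : Fin n → ℝ)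
        + (Matrix.single i i 1 * Jm n) *ᵥ p x)
        ((-(Matrix.single i i 1)) *ᵥ (0 : Fin n → ℝ) + (0 : Matrix (Fin n) (Fin n) ℝ) *ᵥ p x)
      + Sum.elim (((ξ x)ᵀ * Jm n * Matrix.single i i 1
          - Matrix.single i i 1 * Jm n * ξ x) *ᵥ (0 : Fin n → ℝ)
          + (0 : Matrix (Fin n) (Fin n) ℝ) *ᵥ p x)
        ((0 : Matrix (Fin n) (Fin n) ℝ) *ᵥ (0 : Fin n → ℝ)
          + (ξ x * Matrix.single i i 1 * Jm n
          - Matrix.single i i 1 * (ξ x)ᵀ * Jm n) *ᵥ p x))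
      + Sum.elim (0 : Fin n → ℝ) (-((ξ x * Matrix.single i i 1 * Jm n
          - Matrix.single i i 1 * (ξ x)ᵀ * Jm n) *ᵥ p x))
      = (eps n i * p x i) • Sum.elim (Pi.single i 1) (0 : Fin n → ℝ) := by
    funext a
    rcases a with a | a
    · simp [stdJ_mulVec i (p x), Pi.single_apply]
    · simp
  rw [hvec, Matrix.mulVec_smul]


end UKAux

/-- For two null vectors `b, c`, the flat lifts `F_b = Φ₁·(0 ; g₂⁻¹b)` and
`F_c = Φ₁·(0 ; g₂⁻¹c)` have parallel coordinate directions: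
`p_i ∂F_c/∂x_i = q_i ∂F_b/∂x_i`, so `F_b` is a Combescure transform of `F_c`. -/
theorem stmt9 (n : ℕ) (hn : 2 ≤ n)
    (ξ : (Fin n → ℝ) → Matrix (Fin n) (Fin n) ℝ) (hξ : IsUKSolution n ξ)
    (Φ₁ : (Fin n → ℝ) → Matrix (Idx n) (Idx n) ℝ) (hΦ₁ : IsFrame n ξ 1 Φ₁)
    (hΦ₁O : ∀ x, (Φ₁ x)ᵀ * ImR n * Φ₁ x = ImR n)
    (g₁ g₂ : (Fin n → ℝ) → Matrix (Fin n) (Fin n) ℝ)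
    (hΦ₀ : IsFrame n ξ 0 (fun x => Matrix.fromBlocks (g₁ x) 0 0 (g₂ x)))
    (hg₂ : ∀ x, (g₂ x)ᵀ * Jm n * g₂ x = Jm n)
    (b c : Fin n → ℝ) (hb : b ≠ 0) (hc : c ≠ 0)
    (hbnull : b ⬝ᵥ (Jm n *ᵥ b) = 0) (hcnull : c ⬝ᵥ (Jm n *ᵥ c) = 0)
    (p q : (Fin n → ℝ) → Fin n → ℝ)
    (hp : ∀ x, p x = (g₂ x)⁻¹ *ᵥ b) (hq : ∀ x, q x = (g₂ x)⁻¹ *ᵥ c)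
    (Fb Fc : (Fin n → ℝ) → Idx n → ℝ)
    (hFb : ∀ x, Fb x = Φ₁ x *ᵥ Sum.elim (0 : Fin n → ℝ) (p x))
    (hFc : ∀ x, Fc x = Φ₁ x *ᵥ Sum.elim (0 : Fin n → ℝ) (q x)) :
    ∀ (x : Fin n → ℝ) (i : Fin n),
      p x i • pdV Fc i x = q x i • pdV Fb i x := by
  intro x i
  rw [key_deriv n ξ Φ₁ hΦ₁ g₁ g₂ hΦ₀ hg₂ b p hp Fb hFb x i,
    key_deriv n ξ Φ₁ hΦ₁ g₁ g₂ hΦ₀ hg₂ c q hq Fc hFc x i,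
    smul_smul, smul_smul]
  congr 1
  ring

end
end

section
/- Let v ∈ ℂ^{2n} be isotropic with (v,ρv) ≠ 0, and α ∈ ℂ∖{0}. Then for every λ ∈ ℂ∖{α,−α}: (i) p_{α,v}(λ)ᵀ I_{2n−1,1} p_{α,v}(λ) = I_{2n−1,1} (i.e. p_{α,v}(λ) ∈ O(2n−1,1,ℂ)); and (ii) p_{α,v}(λ)·p_{−α,v}(λ) = I, i.e. the inverse of p_{α,v}(λ) is p_{−α,v}(λ). -/
open Matrix

noncomputable section

/-- Diagonal entries of `I_{2n−1,1} = diag(1,…,1,−1)`. -/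
def etaC (n : ℕ) : Idx n → ℂ :=
  Sum.elim (fun _ => 1) (fun i => if (i : ℕ) + 1 = n then -1 else 1)

/-- Diagonal entries of `ρ = diag(I_n, −I_n)`. -/
def rhoC (n : ℕ) : Idx n → ℂ := Sum.elim (fun _ => 1) (fun _ => -1)

/-- The complex bilinear form `(x,y) = xᵀ I_{2n−1,1} y` (no conjugation) on `ℂ^{2n}`. -/
def formC (n : ℕ) (x y : Idx n → ℂ) : ℂ := ∑ a, etaC n a * x a * y a

/-- The vector `ρv`. -/
def rhoV (n : ℕ) (v : Idx n → ℂ) : Idx n → ℂ := fun a => rhoC n a * v a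

/-- `I_{2n−1,1}` as a complex matrix. -/
def ImC (n : ℕ) : Matrix (Idx n) (Idx n) ℂ := Matrix.diagonal (etaC n)

/-- `ρ = diag(I_n, −I_n)` as a complex matrix. -/
def rhoM (n : ℕ) : Matrix (Idx n) (Idx n) ℂ := Matrix.diagonal (rhoC n)

/-- The projection `π_v(x) = ((ρv,x)/(ρv,v))·v` onto `ℂv` along the orthogonal
complement of `ℂρv`, as a matrix (for `v` isotropic with `(v,ρv) ≠ 0`).
Note `π_{ρv} = piM n (rhoV n v)`. -/
def piM (n : ℕ) (v : Idx n → ℂ) : Matrix (Idx n) (Idx n) ℂ :=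
  Matrix.of fun a b => v a * etaC n b * rhoV n v b / formC n (rhoV n v) v

/-- The simple element
`p_{α,v}(λ) = ((λ−α)/(λ+α))π_v + (I − π_v − π_{ρv}) + ((λ+α)/(λ−α))π_{ρv}`. -/
def simpleP (n : ℕ) (α : ℂ) (v : Idx n → ℂ) (lam : ℂ) : Matrix (Idx n) (Idx n) ℂ :=
  ((lam - α) / (lam + α)) • piM n v + (1 - piM n v - piM n (rhoV n v))
    + ((lam + α) / (lam - α)) • piM n (rhoV n v)

lemma rhoV_rhoV (n : ℕ) (v : Idx n → ℂ) : rhoV n (rhoV n v) = v := by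
  funext a; cases a <;> simp [rhoV, rhoC]

lemma formC_comm (n : ℕ) (x y : Idx n → ℂ) : formC n x y = formC n y x :=
  Finset.sum_congr rfl fun a _ => by ring

lemma vecMulVec_mul' {m : Type*} [Fintype m] (a b c d : m → ℂ) :
    vecMulVec a b * vecMulVec c d = (b ⬝ᵥ c) • vecMulVec a d := by
  ext i j
  simp only [Matrix.mul_apply, vecMulVec_apply, Matrix.smul_apply, dotProduct, smul_eq_mul,
    Finset.sum_mul]
  exact Finset.sum_congr rfl fun k _ => by ring

lemma piM_eq (n : ℕ) (v : Idx n → ℂ) :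
    piM n v = (formC n (rhoV n v) v)⁻¹ •
      vecMulVec v (fun b => etaC n b * rhoV n v b) := by
  ext a b
  simp only [piM, Matrix.of_apply, Matrix.smul_apply, vecMulVec_apply, smul_eq_mul,
    div_eq_mul_inv]
  ring

lemma piM_rho_eq (n : ℕ) (v : Idx n → ℂ) :
    piM n (rhoV n v) = (formC n v (rhoV n v))⁻¹ •
      vecMulVec (rhoV n v) (fun b => etaC n b * v b) := by
  rw [piM_eq, rhoV_rhoV]

lemma smul_vmv_mul {m : Type*} [Fintype m] (c1 c2 : ℂ) (u1 w1 u2 w2 : m → ℂ) :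
    (c1 • vecMulVec u1 w1) * (c2 • vecMulVec u2 w2)
      = (c1 * c2 * (w1 ⬝ᵥ u2)) • vecMulVec u1 w2 := by
  rw [smul_mul_assoc, mul_smul_comm, vecMulVec_mul', smul_smul, smul_smul, mul_assoc]

lemma rho_sq (n : ℕ) (a : Idx n) : rhoC n a * rhoC n a = 1 := by
  cases a <;> simp [rhoC]

lemma main_alg {m : Type*} [Fintype m] [DecidableEq m] (P Q : Matrix m m ℂ)
    (hPP : P * P = P) (hQQ : Q * Q = Q) (hPQ : P * Q = 0) (hQP : Q * P = 0)
    (x y : ℂ) (hxy : x * y = 1) :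
    (x • P + (1 - P - Q) + y • Q) * (y • P + (1 - P - Q) + x • Q) = 1 := by
  have hyx : y * x = 1 := by rw [mul_comm]; exact hxy
  have hEP : (1 - P - Q) * P = 0 := by
    rw [sub_mul, sub_mul, one_mul, hPP, hQP, sub_zero, sub_self]
  have hEQ : (1 - P - Q) * Q = 0 := by
    rw [sub_mul, sub_mul, one_mul, hQQ, hPQ]; simp
  have hPE : P * (1 - P - Q) = 0 := by
    rw [mul_sub, mul_sub, mul_one, hPP, hPQ, sub_zero, sub_self]
  have hQE : Q * (1 - P - Q) = 0 := by
    rw [mul_sub, mul_sub, mul_one, hQQ, hQP]; simp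
  have hEE : (1 - P - Q) * (1 - P - Q) = (1 - P - Q) := by
    rw [mul_sub, mul_sub, mul_one, hEP, hEQ, sub_zero, sub_zero]
  simp only [add_mul, mul_add, smul_mul_assoc, mul_smul_comm, smul_smul,
    hPP, hQQ, hPQ, hQP, hPE, hQE, hEP, hEQ, hEE, hxy, hyx, one_smul, smul_zero,
    add_zero, zero_add]
  abel

/-- The simple element `p_{α,v}(λ)` lies in `O(2n−1,1,ℂ)`, with inverse `p_{−α,v}(λ)`. -/
theorem stmt10 (n : ℕ) (hn : 2 ≤ n) (v : Idx n → ℂ)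
    (hviso : formC n v v = 0) (hvρ : formC n v (rhoV n v) ≠ 0)
    (α lam : ℂ) (hα : α ≠ 0) (h1 : lam ≠ α) (h2 : lam ≠ -α) :
    (simpleP n α v lam)ᵀ * ImC n * simpleP n α v lam = ImC n ∧
    simpleP n α v lam * simpleP n (-α) v lam = 1 := by
  have hc : formC n (rhoV n v) v ≠ 0 := by rwa [formC_comm]
  -- dot product facts
  have hd1 : (fun b => etaC n b * rhoV n v b) ⬝ᵥ v = formC n (rhoV n v) v :=
    Finset.sum_congr rfl fun k _ => by simp [formC]
  have hd2 : (fun b => etaC n b * rhoV n v b) ⬝ᵥ rhoV n v = 0 := by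
    have : (fun b => etaC n b * rhoV n v b) ⬝ᵥ rhoV n v = formC n v v := by
      refine Finset.sum_congr rfl fun k _ => ?_
      have := rho_sq n k
      simp only [rhoV]
      ring_nf
      rw [show rhoC n k ^ 2 = rhoC n k * rhoC n k by ring, this]
      ring
    rw [this, hviso]
  have hd3 : (fun b => etaC n b * v b) ⬝ᵥ v = 0 := by
    have : (fun b => etaC n b * v b) ⬝ᵥ v = formC n v v :=
      Finset.sum_congr rfl fun k _ => by ring
    rw [this, hviso]
  have hd4 : (fun b => etaC n b * v b) ⬝ᵥ rhoV n v = formC n v (rhoV n v) :=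
    Finset.sum_congr rfl fun k _ => by ring
  -- projection algebra
  have hPP : piM n v * piM n v = piM n v := by
    rw [piM_eq, smul_vmv_mul, hd1, mul_assoc, inv_mul_cancel₀ hc, mul_one]
  have hQQ : piM n (rhoV n v) * piM n (rhoV n v) = piM n (rhoV n v) := by
    rw [piM_rho_eq, smul_vmv_mul, hd4, mul_assoc, inv_mul_cancel₀ hvρ, mul_one]
  have hPQ : piM n v * piM n (rhoV n v) = 0 := by
    rw [piM_eq, piM_rho_eq, smul_vmv_mul, hd2, mul_zero, zero_smul]
  have hQP : piM n (rhoV n v) * piM n v = 0 := by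
    rw [piM_eq n v, piM_rho_eq, smul_vmv_mul, hd3, mul_zero, zero_smul]
  -- transpose relations
  have hT1 : (piM n v)ᵀ * ImC n = ImC n * piM n (rhoV n v) := by
    ext a b
    simp only [ImC, Matrix.mul_diagonal, Matrix.diagonal_mul, transpose_apply,
      piM, Matrix.of_apply, rhoV_rhoV]
    rw [formC_comm n (rhoV n v) v]
    ring
  have hT2 : (piM n (rhoV n v))ᵀ * ImC n = ImC n * piM n v := by
    ext a b
    simp only [ImC, Matrix.mul_diagonal, Matrix.diagonal_mul, transpose_apply,
      piM, Matrix.of_apply, rhoV_rhoV]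
    rw [formC_comm n (rhoV n v) v]
    ring
  -- scalars
  have hne1 : lam - α ≠ 0 := sub_ne_zero.mpr h1
  have hne2 : lam + α ≠ 0 := by
    intro h; exact h2 (eq_neg_of_add_eq_zero_left h)
  have hab : (lam - α) / (lam + α) * ((lam + α) / (lam - α)) = 1 := by
    field_simp
  have hba : (lam + α) / (lam - α) * ((lam - α) / (lam + α)) = 1 := by
    rw [mul_comm]; exact hab
  have e2 : simpleP n (-α) v lam
      = ((lam + α) / (lam - α)) • piM n v + (1 - piM n v - piM n (rhoV n v))
        + ((lam - α) / (lam + α)) • piM n (rhoV n v) := by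
    unfold simpleP
    simp only [sub_neg_eq_add, ← sub_eq_add_neg]
  have key2 : simpleP n α v lam * simpleP n (-α) v lam = 1 := by
    rw [e2]
    exact main_alg _ _ hPP hQQ hPQ hQP _ _ hab
  refine ⟨?_, key2⟩
  have ht : (simpleP n α v lam)ᵀ * ImC n = ImC n * simpleP n (-α) v lam := by
    rw [e2]
    unfold simpleP
    simp only [transpose_add, transpose_sub, transpose_smul, transpose_one,
      add_mul, sub_mul, mul_add, mul_sub, smul_mul_assoc, mul_smul_comm,
      hT1, hT2, one_mul, mul_one]
    abel
  have key1 : simpleP n (-α) v lam * simpleP n α v lam = 1 := by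
    rw [e2]
    exact main_alg _ _ hPP hQQ hPQ hQP _ _ hba
  rw [ht, Matrix.mul_assoc, key1, mul_one]


end
end

section
/- Let v ∈ ℂ^{2n} be isotropic with (v,ρv) ≠ 0, and α ∈ ℂ∖{0}. For λ ∈ ℂ∖{α} define g_{α,v}(λ) = I + (2α/(λ−α))·π_v and g_{α,ρv}(λ) = I + (2α/(λ−α))·π_{ρv}. Then for every λ ∈ ℂ∖{α,−α}: p_{α,v}(λ) = g_{α,ρv}(λ) · g_{−α,v}(λ). -/
open Matrix

noncomputable section

/-- `g_{α,v}(λ) = I + (2α/(λ−α))·π_v`. -/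
def gS (n : ℕ) (α : ℂ) (v : Idx n → ℂ) (lam : ℂ) : Matrix (Idx n) (Idx n) ℂ :=
  1 + (2 * α / (lam - α)) • piM n v

/-- The factorisation `p_{α,v}(λ) = g_{α,ρv}(λ) · g_{−α,v}(λ)` of a simple element. -/
theorem stmt11 (n : ℕ) (hn : 2 ≤ n) (v : Idx n → ℂ)
    (hviso : formC n v v = 0) (hvρ : formC n v (rhoV n v) ≠ 0)
    (α lam : ℂ) (hα : α ≠ 0) (h1 : lam ≠ α) (h2 : lam ≠ -α) :
    simpleP n α v lam = gS n α (rhoV n v) lam * gS n (-α) v lam := by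
  have hr : rhoV n (rhoV n v) = v := by
    funext x; cases x <;> simp [rhoV, rhoC]
  have h1' : lam - α ≠ 0 := sub_ne_zero.mpr h1
  have h2' : lam + α ≠ 0 := fun h => h2 (by linear_combination h)
  have hzero : piM n (rhoV n v) * piM n v = 0 := by
    ext a c
    simp only [Matrix.mul_apply, piM, Matrix.of_apply, Matrix.zero_apply, hr]
    have step : ∀ b : Idx n, rhoV n v a * etaC n b * v b / formC n v (rhoV n v) *
        (v b * etaC n c * rhoV n v c / formC n (rhoV n v) v)
        = etaC n b * v b * v b *
          (rhoV n v a * etaC n c * rhoV n v c /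
            (formC n v (rhoV n v) * formC n (rhoV n v) v)) := fun b => by ring
    rw [Finset.sum_congr rfl fun b _ => step b, ← Finset.sum_mul]
    have hv : (∑ b : Idx n, etaC n b * v b * v b) = formC n v v := rfl
    rw [hv, hviso, zero_mul]
  have e1 : 2 * (-α) / (lam - (-α)) = (lam - α) / (lam + α) - 1 := by
    field_simp; ring
  have e2 : 2 * α / (lam - α) = (lam + α) / (lam - α) - 1 := by
    field_simp; ring
  have key : gS n α (rhoV n v) lam * gS n (-α) v lam
      = 1 + ((lam - α) / (lam + α) - 1) • piM n v
          + ((lam + α) / (lam - α) - 1) • piM n (rhoV n v) := by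
    unfold gS
    rw [e1, e2, Matrix.add_mul, Matrix.mul_add, Matrix.mul_add]
    simp only [Matrix.one_mul, Matrix.mul_one, Matrix.smul_mul, Matrix.mul_smul,
      hzero, smul_zero, add_zero]
  rw [key]
  unfold simpleP
  module

end
end

section
/- Let Ξ : ℝ^n → 𝔭 be a solution of the U/K-system and Φ a normalised extended flat frame of Ξ. Then: (i) for every α ∈ ℝ and every x, the matrix Φ(x,α) has real entries and satisfies Φ(x,α)ᵀ I_{2n−1,1} Φ(x,α) = I_{2n−1,1}; in particular, if v ∈ ℝ^{2n} is isotropic then Φ(x,α)^{−1}v is real and isotropic. (ii) For every s ∈ ℝ∖{0}, every x, and every v ∈ ℂ^{2n} with conj(v) = ρv, the vector w := Φ(x, is)^{−1} v also satisfies conj(w) = ρw (i.e. Φ(x,is)^{−1} preserves the real form { z ∈ ℂ^{2n} : conj(z) = ρz } = ℝ^n ⊕ iℝ^{n−1,1}). Consequently, if α and a line ℓ = ℂv satisfy condition (ba) (α real and v real, or α purely imaginary and conj(v) = ρv), then so do α and Φ(x,α)^{−1}ℓ. -/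
open Matrix

noncomputable section

/-- Diagonal entries of `I_{2n−1,1}` (real). -/
def etaRS (n : ℕ) : Idx n → ℝ :=
  Sum.elim (fun _ => 1) (fun i => if (i : ℕ) + 1 = n then -1 else 1)

/-- The real bilinear form `(x,y) = xᵀ I_{2n−1,1} y` on `ℝ^{2n}`. -/
def formRS (n : ℕ) (x y : Idx n → ℝ) : ℝ := ∑ a, etaRS n a * x a * y a

/-- Diagonal entries of `ρ = diag(I_n, −I_n)` (real). -/
def rhoRS (n : ℕ) : Idx n → ℝ := Sum.elim (fun _ => 1) (fun _ => -1)

/-- `a_i` as a complex matrix. -/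
def aMC (n : ℕ) (i : Fin n) : Matrix (Idx n) (Idx n) ℂ := (aM n i).map Complex.ofReal

/-- Complex matrix commutator. -/
def liebC {m : Type*} [Fintype m] (A B : Matrix m m ℂ) : Matrix m m ℂ := A * B - B * A

/-- Entrywise partial derivative of a complex-matrix-valued map on `ℝ^n`. -/
def pdMC {n : ℕ} {m : Type*} (f : (Fin n → ℝ) → Matrix m m ℂ) (i : Fin n)
    (x : Fin n → ℝ) : Matrix m m ℂ :=
  Matrix.of fun a b => fderiv ℝ (fun y => f y a b) x (Pi.single i 1)

/-- `Φ : ℝ^n × ℂ → GL(2n,ℂ)` is a normalised extended flat frame of the solution `Ξ`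
(given by `ξ`): smooth in `x`, entire in `λ`, `Φ(0,λ) = I`,
`∂Φ/∂x_i = Φ·(λ a_i + [a_i, Ξ])`, and the U/K-reality and twisting conditions hold. -/
def IsExtFrame (n : ℕ) (ξ : (Fin n → ℝ) → Matrix (Fin n) (Fin n) ℝ)
    (Φ : (Fin n → ℝ) → ℂ → Matrix (Idx n) (Idx n) ℂ) : Prop :=
  (∀ (lam : ℂ) (a b : Idx n), ContDiff ℝ (⊤ : ℕ∞) fun x => Φ x lam a b) ∧
  (∀ (x : Fin n → ℝ) (a b : Idx n), Differentiable ℂ fun lam => Φ x lam a b) ∧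
  (∀ lam : ℂ, Φ 0 lam = 1) ∧
  (∀ (x : Fin n → ℝ) (lam : ℂ) (i : Fin n),
    pdMC (fun y => Φ y lam) i x =
      Φ x lam * (lam • aMC n i + liebC (aMC n i) ((XiM n ξ x).map Complex.ofReal))) ∧
  (∀ (x : Fin n → ℝ) (lam : ℂ),
    (Φ x (starRingEnd ℂ lam)).map (starRingEnd ℂ) = Φ x lam) ∧
  (∀ (x : Fin n → ℝ) (lam : ℂ), rhoM n * Φ x (-lam) * rhoM n = Φ x lam)

-- helpers
def JC (n : ℕ) : Matrix (Fin n) (Fin n) ℂ :=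
  Matrix.diagonal fun i => if (i : ℕ) + 1 = n then (-1 : ℂ) else 1

lemma etaC_mul_self {n : ℕ} (a : Idx n) : etaC n a * etaC n a = 1 := by
  rcases a with a | a <;> simp [etaC] <;> split <;> norm_num

lemma conj_etaC {n : ℕ} (a : Idx n) : starRingEnd ℂ (etaC n a) = etaC n a := by
  rcases a with a | a <;> simp [etaC] <;> split <;> simp

lemma rhoC_mul_self {n : ℕ} (a : Idx n) : rhoC n a * rhoC n a = 1 := by
  rcases a with a | a <;> simp [rhoC]

lemma conj_rhoC {n : ℕ} (a : Idx n) : starRingEnd ℂ (rhoC n a) = rhoC n a := by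
  rcases a with a | a <;> simp [rhoC]

lemma ImC_mul_ImC (n : ℕ) : ImC n * ImC n = 1 := by
  rw [ImC, Matrix.diagonal_mul_diagonal]
  rw [show (fun i => etaC n i * etaC n i) = fun _ => (1:ℂ) from funext etaC_mul_self,
    Matrix.diagonal_one]

lemma rhoM_mul_rhoM (n : ℕ) : rhoM n * rhoM n = 1 := by
  rw [rhoM, Matrix.diagonal_mul_diagonal]
  rw [show (fun i => rhoC n i * rhoC n i) = fun _ => (1:ℂ) from funext rhoC_mul_self,
    Matrix.diagonal_one]

lemma ImC_transpose (n : ℕ) : (ImC n)ᵀ = ImC n := Matrix.diagonal_transpose _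
lemma rhoM_transpose (n : ℕ) : (rhoM n)ᵀ = rhoM n := Matrix.diagonal_transpose _

lemma ImC_comm_rhoM (n : ℕ) : ImC n * rhoM n = rhoM n * ImC n := by
  rw [ImC, rhoM, Matrix.diagonal_mul_diagonal, Matrix.diagonal_mul_diagonal]
  exact congrArg _ (funext fun i => mul_comm _ _)

lemma ImC_eq_fromBlocks (n : ℕ) : ImC n = Matrix.fromBlocks 1 0 0 (JC n) := by
  rw [ImC, JC, ← Matrix.diagonal_one, Matrix.fromBlocks_diagonal]
  rfl

lemma skew_block {n : ℕ} (P : Matrix (Fin n) (Fin n) ℂ) :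
    (Matrix.fromBlocks 0 (Pᵀ * JC n) (-P) 0)ᵀ * ImC n
      + ImC n * Matrix.fromBlocks 0 (Pᵀ * JC n) (-P) 0 = 0 := by
  rw [ImC_eq_fromBlocks, Matrix.fromBlocks_transpose, Matrix.fromBlocks_multiply,
    Matrix.fromBlocks_multiply, Matrix.fromBlocks_add, ← Matrix.fromBlocks_zero]
  congr 1 <;> simp [Matrix.transpose_mul, JC, Matrix.diagonal_transpose, Matrix.mul_assoc]

lemma map_ofReal_mul {m k l : Type*} [Fintype k] (A : Matrix m k ℝ) (B : Matrix k l ℝ) :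
    (A * B).map Complex.ofReal = A.map Complex.ofReal * B.map Complex.ofReal := by
  ext a b
  simp [Matrix.mul_apply, Matrix.map_apply]

lemma Jm_map (n : ℕ) : (Jm n).map Complex.ofReal = JC n := by
  rw [Jm, Matrix.diagonal_map (by simp), JC]
  exact congrArg _ (funext fun i => by split <;> simp)

lemma std_map {n : ℕ} (i : Fin n) :
    (Matrix.single i i (1:ℝ)).map Complex.ofReal = Matrix.single i i (1:ℂ) := by
  ext a b
  simp [Matrix.single, Matrix.map_apply, apply_ite]

lemma std_symm {n : ℕ} (i : Fin n) :
    (Matrix.single i i (1:ℂ))ᵀ = Matrix.single i i (1:ℂ) := by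
  ext a b
  simp [Matrix.single, Matrix.transpose_apply, and_comm]

lemma aMC_eq (n : ℕ) (i : Fin n) :
    aMC n i = Matrix.fromBlocks 0 ((Matrix.single i i (1:ℂ))ᵀ * JC n)
      (-(Matrix.single i i (1:ℂ))) 0 := by
  rw [aMC, aM, Matrix.fromBlocks_map, map_ofReal_mul, Jm_map, std_map, std_symm]
  ext (a|a) (b|b) <;>
    simp [Matrix.fromBlocks, Matrix.map_apply, Matrix.single, apply_ite]

lemma XiC_eq (n : ℕ) (ξ : (Fin n → ℝ) → Matrix (Fin n) (Fin n) ℝ) (x : Fin n → ℝ) :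
    (XiM n ξ x).map Complex.ofReal
      = Matrix.fromBlocks 0 (((ξ x).map Complex.ofReal)ᵀ * JC n)
        (-((ξ x).map Complex.ofReal)) 0 := by
  rw [XiM, Matrix.fromBlocks_map, map_ofReal_mul, Jm_map, Matrix.transpose_map]
  ext (a|a) (b|b) <;> simp [Matrix.fromBlocks, Matrix.map_apply]

lemma skew_aMC (n : ℕ) (i : Fin n) :
    (aMC n i)ᵀ * ImC n + ImC n * aMC n i = 0 := by
  rw [aMC_eq]; exact skew_block _

lemma skew_XiC (n : ℕ) (ξ : (Fin n → ℝ) → Matrix (Fin n) (Fin n) ℝ) (x : Fin n → ℝ) :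
    ((XiM n ξ x).map Complex.ofReal)ᵀ * ImC n + ImC n * (XiM n ξ x).map Complex.ofReal = 0 := by
  rw [XiC_eq]; exact skew_block _

lemma skew_lieb {n : ℕ} (X Y : Matrix (Idx n) (Idx n) ℂ)
    (hX : Xᵀ * ImC n + ImC n * X = 0) (hY : Yᵀ * ImC n + ImC n * Y = 0) :
    (liebC X Y)ᵀ * ImC n + ImC n * liebC X Y = 0 := by
  have hX' : Xᵀ * ImC n = -(ImC n * X) := eq_neg_of_add_eq_zero_left hX
  have hY' : Yᵀ * ImC n = -(ImC n * Y) := eq_neg_of_add_eq_zero_left hY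
  have h1 : Yᵀ * Xᵀ * ImC n = ImC n * Y * X := by
    rw [Matrix.mul_assoc, hX', Matrix.mul_neg, ← Matrix.mul_assoc, hY', Matrix.neg_mul, neg_neg]
  have h2 : Xᵀ * Yᵀ * ImC n = ImC n * X * Y := by
    rw [Matrix.mul_assoc, hY', Matrix.mul_neg, ← Matrix.mul_assoc, hX', Matrix.neg_mul, neg_neg]
  rw [liebC, Matrix.transpose_sub, Matrix.transpose_mul, Matrix.transpose_mul,
    Matrix.sub_mul, Matrix.mul_sub, h1, h2, Matrix.mul_assoc, Matrix.mul_assoc]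
  abel

lemma skew_smul {n : ℕ} (lam : ℂ) (X : Matrix (Idx n) (Idx n) ℂ)
    (hX : Xᵀ * ImC n + ImC n * X = 0) :
    (lam • X)ᵀ * ImC n + ImC n * (lam • X) = 0 := by
  rw [Matrix.transpose_smul, Matrix.smul_mul, Matrix.mul_smul, ← smul_add, hX, smul_zero]

/-- The coefficient matrix of the frame ODE. -/
def Bmat (n : ℕ) (ξ : (Fin n → ℝ) → Matrix (Fin n) (Fin n) ℝ) (lam : ℂ) (i : Fin n)
    (x : Fin n → ℝ) : Matrix (Idx n) (Idx n) ℂ :=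
  lam • aMC n i + liebC (aMC n i) ((XiM n ξ x).map Complex.ofReal)

lemma skew_B (n : ℕ) (ξ : (Fin n → ℝ) → Matrix (Fin n) (Fin n) ℝ) (lam : ℂ) (i : Fin n)
    (x : Fin n → ℝ) :
    (Bmat n ξ lam i x)ᵀ * ImC n + ImC n * Bmat n ξ lam i x = 0 := by
  rw [Bmat, Matrix.transpose_add, Matrix.add_mul, Matrix.mul_add]
  have h1 := skew_smul lam (aMC n i) (skew_aMC n i)
  have h2 := skew_lieb (aMC n i) ((XiM n ξ x).map Complex.ofReal)
    (skew_aMC n i) (skew_XiC n ξ x)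
  calc (lam • aMC n i)ᵀ * ImC n + (liebC (aMC n i) ((XiM n ξ x).map Complex.ofReal))ᵀ * ImC n
      + (ImC n * lam • aMC n i + ImC n * liebC (aMC n i) ((XiM n ξ x).map Complex.ofReal))
      = ((lam • aMC n i)ᵀ * ImC n + ImC n * lam • aMC n i)
        + ((liebC (aMC n i) ((XiM n ξ x).map Complex.ofReal))ᵀ * ImC n
          + ImC n * liebC (aMC n i) ((XiM n ξ x).map Complex.ofReal)) := by abel
    _ = 0 := by rw [h1, h2, add_zero]

/-- key algebraic cancellation -/
lemma key_cancel {n : ℕ} (A B : Matrix (Idx n) (Idx n) ℂ)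
    (hB : Bᵀ * ImC n + ImC n * B = 0) :
    (A * B) * (ImC n * Aᵀ * ImC n) + A * (ImC n * (A * B)ᵀ * ImC n) = 0 := by
  have hB' : Bᵀ * ImC n = -(ImC n * B) := eq_neg_of_add_eq_zero_left hB
  have hMBt : ImC n * Bᵀ = -(B * ImC n) := by
    have : ImC n * Bᵀ * (ImC n * ImC n) = -(B * ImC n) := by
      rw [← Matrix.mul_assoc (ImC n * Bᵀ) (ImC n) (ImC n), Matrix.mul_assoc (ImC n) Bᵀ (ImC n),
        hB', Matrix.mul_neg, Matrix.neg_mul, ← Matrix.mul_assoc (ImC n) (ImC n) B, ImC_mul_ImC, Matrix.one_mul]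
    rwa [ImC_mul_ImC, Matrix.mul_one] at this
  rw [Matrix.transpose_mul, ← Matrix.mul_assoc (ImC n) Bᵀ Aᵀ, hMBt]
  simp only [Matrix.neg_mul, Matrix.mul_neg, Matrix.mul_assoc]
  exact add_neg_cancel _

lemma clm_zero {n : ℕ} (L : (Fin n → ℝ) →L[ℝ] ℂ) (h : ∀ i, L (Pi.single i 1) = 0) : L = 0 := by
  ext w
  have hw : w = ∑ i, w i • (Pi.single i 1 : Fin n → ℝ) := by
    conv_lhs => rw [pi_eq_sum_univ w]
    refine Finset.sum_congr rfl fun i _ => ?_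
    funext j
    simp [Pi.single_apply, eq_comm]
  rw [hw, map_sum]
  simp only [_root_.map_smul, h, smul_zero, Finset.sum_const_zero]
  simp

lemma entry_psi {n : ℕ} (X Y : Matrix (Idx n) (Idx n) ℂ) (a b : Idx n) :
    (X * (ImC n * Yᵀ * ImC n)) a b
      = ∑ c, X a c * Y b c * (etaC n c * etaC n b) := by
  rw [Matrix.mul_apply]
  refine Finset.sum_congr rfl fun c _ => ?_
  rw [ImC, Matrix.mul_diagonal, Matrix.diagonal_mul, Matrix.transpose_apply]
  ring

lemma frame_orth (n : ℕ) (ξ : (Fin n → ℝ) → Matrix (Fin n) (Fin n) ℝ)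
    (Φ : (Fin n → ℝ) → ℂ → Matrix (Idx n) (Idx n) ℂ) (hΦ : IsExtFrame n ξ Φ)
    (lam : ℂ) (x : Fin n → ℝ) :
    Φ x lam * (ImC n * (Φ x lam)ᵀ * ImC n) = 1 := by
  obtain ⟨hsm, -, h0, hode, -, -⟩ := hΦ
  have hdiffE : ∀ a b : Idx n, Differentiable ℝ (fun y => Φ y lam a b) :=
    fun a b => (hsm lam a b).differentiable (by simp)
  set g : Idx n → Idx n → (Fin n → ℝ) → ℂ :=
    fun a b y => ∑ c, Φ y lam a c * Φ y lam b c * (etaC n c * etaC n b) with hg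
  have hd : ∀ (z : Fin n → ℝ) (i : Fin n) (a b : Idx n),
      fderiv ℝ (fun y => Φ y lam a b) z (Pi.single i 1)
        = (Φ z lam * Bmat n ξ lam i z) a b := by
    intro z i a b
    have h2 := congrFun (congrFun (hode z lam i) a) b
    simpa [pdMC, Bmat] using h2
  have hgder : ∀ (a b : Idx n) (z : Fin n → ℝ),
      HasFDerivAt (g a b)
        (∑ c, (etaC n c * etaC n b) •
          (Φ z lam a c • fderiv ℝ (fun y => Φ y lam b c) z
            + Φ z lam b c • fderiv ℝ (fun y => Φ y lam a c) z)) z := by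
    intro a b z
    refine HasFDerivAt.fun_sum fun c _ => ?_
    exact (((hdiffE a c z).hasFDerivAt).mul ((hdiffE b c z).hasFDerivAt)).mul_const _
  have hfzero : ∀ (a b : Idx n) (z : Fin n → ℝ), fderiv ℝ (g a b) z = 0 := by
    intro a b z
    rw [(hgder a b z).fderiv]
    refine clm_zero _ fun i => ?_
    simp only [ContinuousLinearMap.sum_apply, ContinuousLinearMap.smul_apply,
      ContinuousLinearMap.add_apply, hd z i]
    have hz := key_cancel (Φ z lam) (Bmat n ξ lam i z) (skew_B n ξ lam i z)
    have hz' := congrFun (congrFun hz a) b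
    rw [Matrix.add_apply, entry_psi, entry_psi] at hz'
    simp only [Matrix.zero_apply] at hz'
    rw [← Finset.sum_add_distrib] at hz'
    rw [show (0:ℂ) = ∑ c, ((Φ z lam * Bmat n ξ lam i z) a c * Φ z lam b c * (etaC n c * etaC n b)
        + Φ z lam a c * (Φ z lam * Bmat n ξ lam i z) b c * (etaC n c * etaC n b)) from hz'.symm]
    refine Finset.sum_congr rfl fun c _ => ?_
    simp only [smul_eq_mul]
    ring
  have hgd : ∀ a b : Idx n, Differentiable ℝ (g a b) :=
    fun a b z => ((hgder a b z).differentiableAt)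
  have hconst : ∀ (a b : Idx n), g a b x = g a b 0 :=
    fun a b => is_const_of_fderiv_eq_zero (hgd a b) (hfzero a b) x 0
  ext a b
  rw [entry_psi]
  have h1 : g a b x = (Φ x lam * (ImC n * (Φ x lam)ᵀ * ImC n)) a b := (entry_psi _ _ a b).symm
  have h2 : g a b 0 = (1 : Matrix (Idx n) (Idx n) ℂ) a b := by
    have : g a b 0 = ((1 : Matrix (Idx n) (Idx n) ℂ)
        * (ImC n * (1 : Matrix (Idx n) (Idx n) ℂ)ᵀ * ImC n)) a b := by
      rw [← h0 lam]; exact (entry_psi _ _ a b).symm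
    rw [this, Matrix.transpose_one, Matrix.mul_one, ImC_mul_ImC, Matrix.one_mul]
  exact (hconst a b).trans h2
lemma formC_eq_dot {n : ℕ} (v w : Idx n → ℂ) : formC n v w = v ⬝ᵥ (ImC n *ᵥ w) := by
  rw [formC, dotProduct]
  refine Finset.sum_congr rfl fun a _ => ?_
  rw [ImC, Matrix.mulVec_diagonal]
  ring

lemma form_invariant {n : ℕ} (M : Matrix (Idx n) (Idx n) ℂ)
    (hM : Mᵀ * ImC n * M = ImC n) (v : Idx n → ℂ) :
    formC n (M *ᵥ v) (M *ᵥ v) = formC n v v := by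
  rw [formC_eq_dot, formC_eq_dot, Matrix.mulVec_mulVec,
    show M *ᵥ v = v ᵥ* Mᵀ from (Matrix.vecMul_transpose M v).symm,
    ← Matrix.dotProduct_mulVec, Matrix.mulVec_mulVec, ← Matrix.mul_assoc, hM]

lemma orth_of {n : ℕ} (A : Matrix (Idx n) (Idx n) ℂ)
    (h : A * (ImC n * Aᵀ * ImC n) = 1) : Aᵀ * ImC n * A = ImC n := by
  have h2 := mul_eq_one_comm.mp h
  have h3 := congrArg (fun X => ImC n * X) h2
  simp only [Matrix.mul_one] at h3
  calc Aᵀ * ImC n * A = ImC n * (ImC n * (Aᵀ * ImC n) * A) := by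
        rw [← Matrix.mul_assoc, ← Matrix.mul_assoc, ← Matrix.mul_assoc,
          ImC_mul_ImC, Matrix.one_mul]
    _ = ImC n * (ImC n * Aᵀ * ImC n * A) := by rw [Matrix.mul_assoc (ImC n) Aᵀ (ImC n)]
    _ = ImC n := h3

lemma AIA_of {n : ℕ} (A : Matrix (Idx n) (Idx n) ℂ)
    (h : A * (ImC n * Aᵀ * ImC n) = 1) : A * ImC n * Aᵀ = ImC n := by
  have h3 := congrArg (fun X => X * ImC n) h
  simp only [Matrix.one_mul] at h3
  calc A * ImC n * Aᵀ = A * ImC n * Aᵀ * (ImC n * ImC n) := by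
        rw [ImC_mul_ImC, Matrix.mul_one]
    _ = A * (ImC n * Aᵀ * ImC n) * ImC n := by
        simp only [Matrix.mul_assoc]
    _ = ImC n := h3

lemma inv_orth {n : ℕ} (A : Matrix (Idx n) (Idx n) ℂ)
    (h : A * (ImC n * Aᵀ * ImC n) = 1) :
    (A⁻¹)ᵀ * ImC n * A⁻¹ = ImC n := by
  have hinv : A⁻¹ = ImC n * Aᵀ * ImC n := Matrix.inv_eq_right_inv h
  have hAIA := AIA_of A h
  rw [hinv]
  have ht : (ImC n * Aᵀ * ImC n)ᵀ = ImC n * A * ImC n := by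
    rw [Matrix.transpose_mul, Matrix.transpose_mul, ImC_transpose, Matrix.transpose_transpose,
      Matrix.mul_assoc]
  rw [ht]
  calc ImC n * A * ImC n * ImC n * (ImC n * Aᵀ * ImC n)
      = ImC n * (A * ((ImC n * ImC n) * (ImC n * (Aᵀ * ImC n)))) := by
        simp only [Matrix.mul_assoc]
    _ = ImC n * (A * ImC n * Aᵀ * ImC n) := by
        rw [ImC_mul_ImC, Matrix.one_mul]; simp only [Matrix.mul_assoc]
    _ = ImC n * (ImC n * ImC n) := by rw [Matrix.mul_assoc A (ImC n) Aᵀ] at *; rw [hAIA, ImC_mul_ImC, Matrix.mul_one]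
    _ = ImC n := by rw [ImC_mul_ImC, Matrix.mul_one]

lemma inv_map_conj {n : ℕ} (A N : Matrix (Idx n) (Idx n) ℂ) (hAN : A * N = 1) :
    (A⁻¹).map (starRingEnd ℂ) = (A.map (starRingEnd ℂ))⁻¹ := by
  have h1 : A.map (starRingEnd ℂ) * N.map (starRingEnd ℂ) = 1 := by
    rw [← Matrix.map_mul, hAN, Matrix.map_one _ (map_zero _) (map_one _)]
  rw [Matrix.inv_eq_right_inv hAN, Matrix.inv_eq_right_inv h1]
lemma rho_entry {n : ℕ} (M : Matrix (Idx n) (Idx n) ℂ) (a b : Idx n) :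
    (rhoM n * M * rhoM n) a b = rhoC n a * M a b * rhoC n b := by
  rw [rhoM, Matrix.mul_diagonal, Matrix.diagonal_mul]

/-- The normalised extended flat frame of a solution of the U/K-system is real and
orthogonal for real `λ`, and `Φ(x,is)⁻¹` preserves the real form
`{z : conj z = ρz} = ℝ^n ⊕ iℝ^{n−1,1}` for purely imaginary `is`. -/
theorem stmt13 (n : ℕ) (hn : 2 ≤ n)
    (ξ : (Fin n → ℝ) → Matrix (Fin n) (Fin n) ℝ) (hξ : IsUKSolution n ξ)
    (Φ : (Fin n → ℝ) → ℂ → Matrix (Idx n) (Idx n) ℂ) (hΦ : IsExtFrame n ξ Φ) :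
    (∀ (α : ℝ) (x : Fin n → ℝ),
      (∀ a b : Idx n, ((Φ x (α : ℂ)) a b).im = 0) ∧
      ((Φ x (α : ℂ))ᵀ * ImC n * Φ x (α : ℂ) = ImC n) ∧
      (∀ v : Idx n → ℂ, (∀ a, (v a).im = 0) → formC n v v = 0 →
        (∀ a, (((Φ x (α : ℂ))⁻¹ *ᵥ v) a).im = 0) ∧
        formC n ((Φ x (α : ℂ))⁻¹ *ᵥ v) ((Φ x (α : ℂ))⁻¹ *ᵥ v) = 0)) ∧
    (∀ s : ℝ, s ≠ 0 → ∀ (x : Fin n → ℝ) (v : Idx n → ℂ),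
      (∀ a, starRingEnd ℂ (v a) = rhoC n a * v a) →
      ∀ a, starRingEnd ℂ (((Φ x (Complex.I * s))⁻¹ *ᵥ v) a) =
        rhoC n a * ((Φ x (Complex.I * s))⁻¹ *ᵥ v) a) := by

  have horth := frame_orth n ξ Φ hΦ
  have hreal := hΦ.2.2.2.2.1
  have htw := hΦ.2.2.2.2.2
  constructor
  · intro α x
    set A := Φ x (α : ℂ) with hA
    have hO := horth (α : ℂ) x
    have hAc : A.map (starRingEnd ℂ) = A := by
      have := hreal x (α : ℂ)
      rwa [Complex.conj_ofReal] at this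
    have hAentry : ∀ a b, starRingEnd ℂ (A a b) = A a b := by
      intro a b; exact congrFun (congrFun hAc a) b
    refine ⟨fun a b => Complex.conj_eq_iff_im.mp (hAentry a b), orth_of A hO, ?_⟩
    intro v hv hform
    have hinvc : (A⁻¹).map (starRingEnd ℂ) = A⁻¹ := by
      rw [inv_map_conj A _ hO, hAc]
    have hinventry : ∀ a b, starRingEnd ℂ (A⁻¹ a b) = A⁻¹ a b :=
      fun a b => congrFun (congrFun hinvc a) b
    constructor
    · intro a
      refine Complex.conj_eq_iff_im.mp ?_
      rw [show (A⁻¹ *ᵥ v) a = ∑ b, A⁻¹ a b * v b from rfl, map_sum]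
      refine Finset.sum_congr rfl fun b _ => ?_
      rw [_root_.map_mul, hinventry, Complex.conj_eq_iff_im.mpr (hv b)]
    · rw [form_invariant A⁻¹ (inv_orth A hO) v, hform]
  · intro s hs x v hv a
    set μ : ℂ := Complex.I * s with hμ
    set A := Φ x μ with hA
    have hO := horth μ x
    have hconjμ : starRingEnd ℂ μ = -μ := by
      simp [hμ, Complex.conj_ofReal]
    have hminus : Φ x (-μ) = rhoM n * A * rhoM n := by
      have h1 := htw x μ
      have h2 := congrArg (fun X => rhoM n * X * rhoM n) h1
      calc Φ x (-μ) = rhoM n * rhoM n * Φ x (-μ) * (rhoM n * rhoM n) := by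
            rw [rhoM_mul_rhoM, Matrix.one_mul, Matrix.mul_one]
        _ = rhoM n * (rhoM n * Φ x (-μ) * rhoM n) * rhoM n := by
            simp only [Matrix.mul_assoc]
        _ = rhoM n * A * rhoM n := by rw [h1]
    have hAc : A.map (starRingEnd ℂ) = rhoM n * A * rhoM n := by
      have h1 := hreal x μ
      rw [hconjμ] at h1
      have h2 := congrArg (fun M => M.map (starRingEnd ℂ)) h1
      rw [← h2]
      rw [← hminus]
      ext a b
      simp [Matrix.map_apply]
    have hinvc : (A⁻¹).map (starRingEnd ℂ) = rhoM n * A⁻¹ * rhoM n := by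
      rw [inv_map_conj A _ hO, hAc]
      have hinv : A⁻¹ = ImC n * Aᵀ * ImC n := Matrix.inv_eq_right_inv hO
      have hprod : (rhoM n * A * rhoM n) * (rhoM n * A⁻¹ * rhoM n) = 1 := by
        have hAN : A * A⁻¹ = 1 := by rw [hinv]; exact hO
        calc (rhoM n * A * rhoM n) * (rhoM n * A⁻¹ * rhoM n)
            = rhoM n * (A * ((rhoM n * rhoM n) * (A⁻¹ * rhoM n))) := by
              simp only [Matrix.mul_assoc]
          _ = rhoM n * (A * A⁻¹ * rhoM n) := by
              rw [rhoM_mul_rhoM, Matrix.one_mul]; simp only [Matrix.mul_assoc]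
          _ = 1 := by rw [hAN, Matrix.one_mul, rhoM_mul_rhoM]
      exact Matrix.inv_eq_right_inv hprod
    have hinventry : ∀ a b, starRingEnd ℂ (A⁻¹ a b) = rhoC n a * A⁻¹ a b * rhoC n b := by
      intro a b
      have := congrFun (congrFun hinvc a) b
      rwa [rho_entry] at this
    rw [show (A⁻¹ *ᵥ v) a = ∑ b, A⁻¹ a b * v b from rfl, map_sum, Finset.mul_sum]
    refine Finset.sum_congr rfl fun b _ => ?_
    rw [_root_.map_mul, hinventry, hv b]
    calc rhoC n a * A⁻¹ a b * rhoC n b * (rhoC n b * v b)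
        = rhoC n a * (A⁻¹ a b * v b) * (rhoC n b * rhoC n b) := by ring
      _ = rhoC n a * (A⁻¹ a b * v b) := by rw [rhoC_mul_self, mul_one]


end
end

section
/- Let Φ ∈ GL(2n,ℝ) satisfy Φᵀ I_{2n−1,1} Φ = I_{2n−1,1}, and denote its columns by e₁,…,e_n, u₁,…,u_n (so (e_i,e_j) = δ_{ij}, (u_i,u_j) = ε_i δ_{ij}, (e_i,u_j) = 0). Let α ∈ ℝ∖{0,1,−1}, and let W, Z, m ∈ ℝ^n with Σ_i W_i² = 2 and ZᵀJZ = −2; write ⟨Z,m⟩ := ZᵀJm. Define A := Σ_i W_i e_i, B := Σ_i Z_i u_i, F := Σ_j m_j u_j, F̃ := F + (⟨Z,m⟩/(1−α²))·(αA + B), ũ_i := u_i − (α ε_i Z_i/(1−α²))·(A + αB), ξ := (1/2)⟨Z,m⟩·B, and ξ̃ := −(1/2)⟨Z,m⟩·Σ_j Z_j ũ_j. Then F + ξ = F̃ + ξ̃ and (ξ,ξ) = (ξ̃,ξ̃) = −(1/2)⟨Z,m⟩². (Thus F and its Ribaucour transform F̃ envelop a common congruence: they are tangent to the same quadric with centre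 F + ξ and squared radius (ξ,ξ).) -/
open Matrix

noncomputable section

lemma formR_comm {n : ℕ} (x y : Idx n → ℝ) : formR n x y = formR n y x :=
  Finset.sum_congr rfl fun a _ => by ring

lemma formR_add_left {n : ℕ} (x y z : Idx n → ℝ) :
    formR n (x + y) z = formR n x z + formR n y z := by
  simp only [formR, Pi.add_apply, ← Finset.sum_add_distrib]
  exact Finset.sum_congr rfl fun a _ => by ring

lemma formR_smul_left {n : ℕ} (c : ℝ) (x y : Idx n → ℝ) :
    formR n (c • x) y = c * formR n x y := by
  simp only [formR, Pi.smul_apply, smul_eq_mul, Finset.mul_sum]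
  exact Finset.sum_congr rfl fun a _ => by ring

lemma formR_zero_left {n : ℕ} (y : Idx n → ℝ) : formR n 0 y = 0 := by
  simp [formR]

lemma formR_sum_left {n : ℕ} {ι : Type*} (s : Finset ι) (g : ι → Idx n → ℝ)
    (y : Idx n → ℝ) : formR n (∑ i ∈ s, g i) y = ∑ i ∈ s, formR n (g i) y := by
  classical
  induction s using Finset.induction with
  | empty => simp [formR_zero_left]
  | insert _ _ h ih => simp [Finset.sum_insert h, formR_add_left, ih]

lemma formR_add_right {n : ℕ} (x y z : Idx n → ℝ) :
    formR n x (y + z) = formR n x y + formR n x z := by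
  rw [formR_comm, formR_add_left, formR_comm y x, formR_comm z x]

lemma formR_smul_right {n : ℕ} (c : ℝ) (x y : Idx n → ℝ) :
    formR n x (c • y) = c * formR n x y := by
  rw [formR_comm, formR_smul_left, formR_comm]

lemma formR_sum_right {n : ℕ} {ι : Type*} (s : Finset ι) (g : ι → Idx n → ℝ)
    (x : Idx n → ℝ) : formR n x (∑ i ∈ s, g i) = ∑ i ∈ s, formR n x (g i) := by
  rw [formR_comm, formR_sum_left]
  exact Finset.sum_congr rfl fun i _ => formR_comm _ _

/-- `F` and its Ribaucour transform `F̃` envelop a common congruence: `F + ξ = F̃ + ξ̃`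
and `(ξ,ξ) = (ξ̃,ξ̃) = −(1/2)⟨Z,m⟩²`, so both are tangent to the quadric with centre
`F + ξ` and squared radius `(ξ,ξ)`. -/
theorem stmt16 (n : ℕ) (hn : 2 ≤ n)
    (Φ : Matrix (Idx n) (Idx n) ℝ) (hΦ : Φᵀ * ImR n * Φ = ImR n)
    (e u : Fin n → Idx n → ℝ)
    (he : ∀ i a, e i a = Φ a (Sum.inl i)) (hu : ∀ i a, u i a = Φ a (Sum.inr i))
    (α : ℝ) (hα0 : α ≠ 0) (hα1 : α ≠ 1) (hα1' : α ≠ -1)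
    (W Z m : Fin n → ℝ) (hW : ∑ i, W i ^ 2 = 2)
    (hZ : ∑ i, eps n i * Z i * Z i = -2)
    (zm : ℝ) (hzm : zm = ∑ i, eps n i * Z i * m i)
    (A B F Ft ξv ξt : Idx n → ℝ) (ut : Fin n → Idx n → ℝ)
    (hA : A = ∑ i, W i • e i) (hB : B = ∑ i, Z i • u i)
    (hF : F = ∑ j, m j • u j)
    (hFt : Ft = F + (zm / (1 - α ^ 2)) • (α • A + B))
    (hut : ∀ i, ut i = u i - (α * eps n i * Z i / (1 - α ^ 2)) • (A + α • B))
    (hξ : ξv = (1 / 2 * zm) • B)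
    (hξt : ξt = -(1 / 2 * zm) • ∑ j, Z j • ut j) :
    F + ξv = Ft + ξt ∧
    formR n ξv ξv = -(1 / 2) * zm ^ 2 ∧
    formR n ξt ξt = -(1 / 2) * zm ^ 2 := by
  classical
  have h1 : (1 : ℝ) - α ^ 2 ≠ 0 := by
    intro h
    have h' : (α - 1) * (α + 1) = 0 := by nlinarith
    rcases mul_eq_zero.1 h' with h'' | h''
    · exact hα1 (by linarith)
    · exact hα1' (by linarith)
  have hdiag : ImR n = Matrix.diagonal (etaR n) := by
    ext (a | a) (b | b) <;>
      simp [ImR, Jm, etaR, Matrix.diagonal_apply, Matrix.one_apply, Matrix.fromBlocks]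
  have horth : ∀ a b, (∑ x, etaR n x * Φ x a * Φ x b) = Matrix.diagonal (etaR n) a b := by
    intro a b
    have h : (Φᵀ * Matrix.diagonal (etaR n) * Φ) a b = Matrix.diagonal (etaR n) a b := by
      rw [← hdiag, hΦ]
    rw [← h, Matrix.mul_apply]
    simp only [Matrix.mul_diagonal, Matrix.transpose_apply]
    exact Finset.sum_congr rfl fun x _ => by ring
  have hee : ∀ i j, formR n (e i) (e j) = if i = j then 1 else 0 := by
    intro i j
    rw [show formR n (e i) (e j) = ∑ a, etaR n a * Φ a (Sum.inl i) * Φ a (Sum.inl j) from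
      Finset.sum_congr rfl fun a _ => by rw [he, he],
      horth]
    simp [Matrix.diagonal_apply, etaR]
  have heu : ∀ i j, formR n (e i) (u j) = 0 := by
    intro i j
    rw [show formR n (e i) (u j) = ∑ a, etaR n a * Φ a (Sum.inl i) * Φ a (Sum.inr j) from
      Finset.sum_congr rfl fun a _ => by rw [he, hu],
      horth]
    simp [Matrix.diagonal_apply]
  have huu : ∀ i j, formR n (u i) (u j) = if i = j then eps n i else 0 := by
    intro i j
    rw [show formR n (u i) (u j) = ∑ a, etaR n a * Φ a (Sum.inr i) * Φ a (Sum.inr j) from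
      Finset.sum_congr rfl fun a _ => by rw [hu, hu],
      horth]
    by_cases h : i = j <;> simp [Matrix.diagonal_apply, etaR, eps, h]
  have fAA : formR n A A = 2 := by
    rw [hA, formR_sum_left]
    rw [show ∀ x, (∑ i, formR n (W i • e i) x) = ∑ i, W i * formR n (e i) x from
      fun x => Finset.sum_congr rfl fun i _ => formR_smul_left _ _ _]
    have : ∀ i, W i * formR n (e i) (∑ j, W j • e j) = W i * W i := by
      intro i
      rw [formR_sum_right]
      rw [show (∑ j, formR n (e i) (W j • e j)) = ∑ j, W j * (if i = j then 1 else 0) from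
        Finset.sum_congr rfl fun j _ => by rw [formR_smul_right, hee]]
      simp
    rw [Finset.sum_congr rfl fun i _ => this i, ← hW]
    exact Finset.sum_congr rfl fun i _ => by ring
  have fBB : formR n B B = -2 := by
    rw [hB, formR_sum_left]
    rw [show ∀ x, (∑ i, formR n (Z i • u i) x) = ∑ i, Z i * formR n (u i) x from
      fun x => Finset.sum_congr rfl fun i _ => formR_smul_left _ _ _]
    have : ∀ i, Z i * formR n (u i) (∑ j, Z j • u j) = eps n i * Z i * Z i := by
      intro i
      rw [formR_sum_right]
      rw [show (∑ j, formR n (u i) (Z j • u j)) = ∑ j, Z j * (if i = j then eps n i else 0) from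
        Finset.sum_congr rfl fun j _ => by rw [formR_smul_right, huu]]
      simp [mul_ite]
      ring
    rw [Finset.sum_congr rfl fun i _ => this i, hZ]
  have fAB : formR n A B = 0 := by
    rw [hA, hB, formR_sum_left]
    refine Finset.sum_eq_zero fun i _ => ?_
    rw [formR_smul_left, formR_sum_right]
    rw [show (∑ j, formR n (e i) (Z j • u j)) = 0 from
      Finset.sum_eq_zero fun j _ => by rw [formR_smul_right, heu]; ring]
    ring
  have fBA : formR n B A = 0 := by rw [formR_comm]; exact fAB
  have hsum : ∑ j, Z j • ut j = B + (2 * α / (1 - α ^ 2)) • (A + α • B) := by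
    have step : ∀ j, Z j • ut j
        = Z j • u j - (Z j * (α * eps n j * Z j / (1 - α ^ 2))) • (A + α • B) := by
      intro j; rw [hut j, smul_sub, smul_smul]
    rw [Finset.sum_congr rfl fun j _ => step j, Finset.sum_sub_distrib, ← Finset.sum_smul, ← hB]
    have hc : ∑ j, Z j * (α * eps n j * Z j / (1 - α ^ 2)) = -(2 * α) / (1 - α ^ 2) := by
      rw [show (∑ j, Z j * (α * eps n j * Z j / (1 - α ^ 2)))
          = (α / (1 - α ^ 2)) * ∑ j, eps n j * Z j * Z j from by
        rw [Finset.mul_sum]; exact Finset.sum_congr rfl fun j _ => by ring, hZ]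
      rw [div_mul_eq_mul_div]
      congr 1
      ring
    rw [hc, sub_eq_add_neg, ← neg_smul, neg_div, neg_neg]
  refine ⟨?_, ?_, ?_⟩
  · rw [hξ, hξt, hFt, hsum]
    match_scalars <;> field_simp <;> ring
  · rw [hξ, formR_smul_left, formR_smul_right, fBB]
    ring
  · rw [hξt, hsum]
    simp only [formR_add_left, formR_add_right, formR_smul_left, formR_smul_right,
      fAA, fBB, fAB, fBA]
    field_simp
    ring

end
end

section
/- Let n ≥ 3 and 1 ≤ p ≤ n−2. Define 2n×2n matrices in n×n block form: a_i = [[0, e_{ii}],[−J e_{ii}, 0]] for 1 ≤ i ≤ p, and a_j = [[0, e_{j,n−1} − e_{j,n}],[−(e_{n−1,j} + e_{n,j}), 0]] for p+1 ≤ j ≤ n, where e_{rs} is the n×n matrix with a single 1 in entry (r,s). Then: (i) each a_i lies in 𝔭; (ii) [a_i, a_j] = 0 for all i, j, so 𝔞_p := span{a₁,…,a_n} is an abelian subspace of 𝔭; (iii) 𝔞_p is maximal abelian in 𝔭, i.e. any X ∈ 𝔭 with [X, a_i] = 0 for all 1 ≤ i ≤ n lies in 𝔞_p; (iv) for each p+1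 ≤ j ≤ n, a_j ≠ 0 and a_j³ = 0, so 𝔞_p contains nonzero nilpotent matrices (hence 𝔞_p is a non-semisimple maximal abelian subalgebra of 𝔭, not conjugate to the diagonal one). -/
open Matrix

noncomputable section

/-- The `−1` eigenspace `𝔭` of `τ(X) = ρXρ⁻¹` on `𝔬(2n−1,1)`:
`𝔭 = { [[0, B],[C, 0]] : B, C ∈ gl(n,ℝ), B = −CᵀJ }`. -/
def pSet (n : ℕ) : Set (Matrix (Idx n) (Idx n) ℝ) :=
  {X | ∃ B C : Matrix (Fin n) (Fin n) ℝ,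
    X = Matrix.fromBlocks 0 B C 0 ∧ B = -(Cᵀ * Jm n)}

section helpers
variable {n : ℕ}

lemma mulE (M : Matrix (Fin n) (Fin n) ℝ) (i j r s : Fin n) :
    (M * Matrix.single i j (1:ℝ)) r s = if s = j then M r i else 0 := by
  rw [Matrix.mul_apply]
  simp [Matrix.single, Finset.mul_sum, eq_comm, ite_and]

lemma Emul (M : Matrix (Fin n) (Fin n) ℝ) (i j r s : Fin n) :
    (Matrix.single i j (1:ℝ) * M) r s = if r = i then M j s else 0 := by
  rw [Matrix.mul_apply]
  simp [Matrix.single, eq_comm, ite_and]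

lemma EE (i j k t : Fin n) :
    Matrix.single i j (1:ℝ) * Matrix.single k t 1 =
      if j = k then Matrix.single i t 1 else 0 := by
  ext r s
  rw [mulE]
  by_cases h : j = k <;> simp [Matrix.single, h, ite_and, and_comm]
  · split_ifs <;> simp_all [eq_comm]

lemma Etrans (i j : Fin n) :
    (Matrix.single i j (1:ℝ))ᵀ = Matrix.single j i 1 := by
  ext r s; simp [Matrix.single, and_comm]

lemma EmulJ (i j : Fin n) (h : (j:ℕ) + 1 ≠ n) :
    Matrix.single i j (1:ℝ) * Jm n = Matrix.single i j 1 := by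
  ext r s
  rw [Jm, Matrix.mul_diagonal]
  by_cases hs : (s:ℕ) + 1 = n
  · have : j ≠ s := fun hjs => h (hjs ▸ hs)
    simp [Matrix.single, hs, this, ite_and]
  · simp [hs]

lemma EmulJ' (i j : Fin n) (h : (j:ℕ) + 1 = n) :
    Matrix.single i j (1:ℝ) * Jm n = -(Matrix.single i j 1) := by
  ext r s
  rw [Jm, Matrix.mul_diagonal]
  by_cases hs : (s:ℕ) + 1 = n
  · simp [Matrix.single, hs]
  · have : j ≠ s := fun hjs => hs (hjs ▸ h)
    simp [Matrix.single, hs, this, ite_and]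

lemma JmulE (i j : Fin n) (h : (i:ℕ) + 1 ≠ n) :
    Jm n * Matrix.single i j (1:ℝ) = Matrix.single i j 1 := by
  ext r s
  rw [Jm, Matrix.diagonal_mul]
  by_cases hr : (r:ℕ) + 1 = n
  · have : i ≠ r := fun hir => h (hir ▸ hr)
    simp [Matrix.single, hr, this, ite_and]
  · simp [hr]

end helpers

set_option maxHeartbeats 1600000 in
/-- The generators of the non-semisimple maximal abelian subalgebra `𝔞_p ⊆ 𝔭`:
`a_i = [[0, e_{ii}],[−J e_{ii}, 0]]` for `i ≤ p` and
`a_j = [[0, e_{j,n−1} − e_{j,n}],[−(e_{n−1,j} + e_{n,j}), 0]]` for `j > p`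
(indices written `1`-based as in the paper; here `0`-based, so the last two
columns/rows have indices `n−2` and `n−1`). `𝔞_p = span{a₁,…,a_n}` is abelian,
maximal abelian in `𝔭`, and contains nonzero nilpotent elements, hence is a
non-semisimple maximal abelian subalgebra of `𝔭`. -/
theorem stmt19 (n p : ℕ) (hn : 3 ≤ n) (hp1 : 1 ≤ p) (hp2 : p ≤ n - 2)
    (a : Fin n → Matrix (Idx n) (Idx n) ℝ)
    (ha : ∀ i : Fin n, a i =
      if (i : ℕ) < p then
        Matrix.fromBlocks 0 (Matrix.single i i 1)
          (-(Jm n * Matrix.single i i 1)) 0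
      else
        Matrix.fromBlocks 0
          (Matrix.single i ⟨n - 2, by omega⟩ 1 -
            Matrix.single i ⟨n - 1, by omega⟩ 1)
          (-(Matrix.single (⟨n - 2, by omega⟩ : Fin n) i 1 +
            Matrix.single (⟨n - 1, by omega⟩ : Fin n) i 1)) 0) :
    -- (i) each a_i lies in 𝔭
    (∀ i : Fin n, a i ∈ pSet n) ∧
    -- (ii) 𝔞_p is abelian
    (∀ i j : Fin n, a i * a j = a j * a i) ∧
    -- (iii) 𝔞_p is maximal abelian in 𝔭
    (∀ X ∈ pSet n, (∀ i : Fin n, X * a i = a i * X) →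
      ∃ c : Fin n → ℝ, X = ∑ i, c i • a i) ∧
    -- (iv) for j > p, a_j is a nonzero nilpotent matrix
    (∀ j : Fin n, p ≤ (j : ℕ) → a j ≠ 0 ∧ a j ^ 3 = 0) := by
  have hn2 : n - 2 < n := by omega
  have hn1 : n - 1 < n := by omega
  set m2 : Fin n := ⟨n - 2, hn2⟩ with hm2def
  set l1 : Fin n := ⟨n - 1, hn1⟩ with hl1def
  have hm2v : (m2 : ℕ) = n - 2 := rfl
  have hl1v : (l1 : ℕ) = n - 1 := rfl
  have hm2L : m2 ≠ l1 := Fin.ne_of_val_ne (by omega)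
  have hm2p : ¬ ((m2 : ℕ) < p) := by omega
  have hl1p : ¬ ((l1 : ℕ) < p) := by omega
  have haf1 : ∀ i : Fin n, (i:ℕ) < p →
      a i = fromBlocks 0 (Matrix.single i i 1) (-(Matrix.single i i 1)) 0 := by
    intro i h
    rw [ha i, if_pos h, JmulE i i (by omega)]
  have haf2 : ∀ i : Fin n, ¬ (i:ℕ) < p →
      a i = fromBlocks 0 (Matrix.single i m2 1 - Matrix.single i l1 1)
        (-(Matrix.single m2 i 1 + Matrix.single l1 i 1)) 0 := by
    intro i h
    rw [ha i, if_neg h]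
  -- (i)
  have part1 : ∀ i : Fin n, a i ∈ pSet n := by
    intro i
    by_cases h : (i:ℕ) < p
    · refine ⟨Matrix.single i i 1, -(Matrix.single i i 1), haf1 i h, ?_⟩
      rw [transpose_neg, Etrans, neg_mul, neg_neg, EmulJ i i (by omega)]
    · refine ⟨_, _, haf2 i h, ?_⟩
      rw [transpose_neg, transpose_add, Etrans, Etrans, neg_mul, add_mul,
        EmulJ i m2 (by omega), EmulJ' i l1 (by omega)]
      abel
  -- key for (ii)
  have hkey : ∀ i j : Fin n, i ≠ j → a i * a j = 0 := by
    intro i j hij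
    by_cases hi : (i:ℕ) < p <;> by_cases hj : (j:ℕ) < p
    · rw [haf1 i hi, haf1 j hj, fromBlocks_multiply]
      simp [EE, hij, Ne.symm hij]
    · have him2 : i ≠ m2 := Fin.ne_of_val_ne (by omega)
      have hil1 : i ≠ l1 := Fin.ne_of_val_ne (by omega)
      rw [haf1 i hi, haf2 j hj, fromBlocks_multiply]
      simp [mul_neg, neg_mul, mul_sub, sub_mul, mul_add, add_mul, EE,
        hij, Ne.symm hij, him2, hil1]
    · have hjm2 : m2 ≠ j := Fin.ne_of_val_ne (by omega)
      have hjl1 : l1 ≠ j := Fin.ne_of_val_ne (by omega)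
      rw [haf2 i hi, haf1 j hj, fromBlocks_multiply]
      simp [mul_neg, neg_mul, mul_sub, sub_mul, mul_add, add_mul, EE,
        hij, Ne.symm hij, hjm2, hjl1]
    · rw [haf2 i hi, haf2 j hj, fromBlocks_multiply]
      simp [mul_neg, neg_mul, mul_sub, sub_mul, mul_add, add_mul, EE,
        hij, Ne.symm hij, hm2L, Ne.symm hm2L]
  have part2 : ∀ i j : Fin n, a i * a j = a j * a i := by
    intro i j
    rcases eq_or_ne i j with rfl | h
    · rfl
    · rw [hkey i j h, hkey j i h.symm]
  -- (iv)
  have part4 : ∀ j : Fin n, p ≤ (j : ℕ) → a j ≠ 0 ∧ a j ^ 3 = 0 := by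
    intro j hj
    have hjp : ¬ (j:ℕ) < p := by omega
    constructor
    · intro h0
      rw [haf2 j hjp] at h0
      have he := congrFun (congrFun h0 (Sum.inl j)) (Sum.inr m2)
      simp [Matrix.single, Ne.symm hm2L] at he
    · rw [pow_succ, pow_succ, pow_one, haf2 j hjp, fromBlocks_multiply,
        fromBlocks_multiply]
      simp [mul_neg, neg_mul, mul_sub, sub_mul, mul_add, add_mul, EE,
        hm2L, Ne.symm hm2L]
  refine ⟨part1, part2, ?_, part4⟩
  -- (iii)
  rintro X ⟨B, C, rfl, hBC⟩ hcomm
  -- entrywise form of B = -(Cᵀ J)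
  have hBCe : ∀ r s : Fin n,
      B r s = -(C s r * (if (s:ℕ) + 1 = n then (-1:ℝ) else 1)) := by
    intro r s
    rw [hBC]
    simp [Jm, Matrix.mul_diagonal]
  -- block equations from commutation, for i < p
  have hK : ∀ i : Fin n, (i:ℕ) < p →
      B * Matrix.single i i 1 = -(Matrix.single i i 1 * C) ∧
      C * Matrix.single i i 1 = -(Matrix.single i i 1 * B) := by
    intro i h
    have hc := hcomm i
    rw [haf1 i h, fromBlocks_multiply, fromBlocks_multiply] at hc
    simp only [Matrix.zero_mul, Matrix.mul_zero, add_zero, zero_add,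
      mul_neg, neg_mul] at hc
    obtain ⟨h1, -, -, h2⟩ := Matrix.fromBlocks_inj.mp hc
    exact ⟨by rw [← neg_neg (B * Matrix.single i i 1), h1], h2⟩
  -- block equations from commutation, for i ≥ p
  have hK' : ∀ j : Fin n, ¬ (j:ℕ) < p →
      B * (Matrix.single m2 j 1 + Matrix.single l1 j 1) =
        -((Matrix.single j m2 1 - Matrix.single j l1 1) * C) ∧
      C * (Matrix.single j m2 1 - Matrix.single j l1 1) =
        -((Matrix.single m2 j 1 + Matrix.single l1 j 1) * B) := by
    intro j h
    have hc := hcomm j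
    rw [haf2 j h, fromBlocks_multiply, fromBlocks_multiply] at hc
    simp only [Matrix.zero_mul, Matrix.mul_zero, add_zero, zero_add,
      mul_neg, neg_mul] at hc
    obtain ⟨h1, -, -, h2⟩ := Matrix.fromBlocks_inj.mp hc
    exact ⟨by rw [← neg_neg (B * _), h1], h2⟩
  -- scalar equations
  have e1 : ∀ i : Fin n, (i:ℕ) < p → ∀ r s : Fin n,
      (if s = i then B r i else 0) = -(if r = i then C i s else 0) := by
    intro i h r s
    have := congrFun (congrFun (hK i h).1 r) s
    simpa [mulE, Emul] using this
  have e2 : ∀ i : Fin n, (i:ℕ) < p → ∀ r s : Fin n,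
      (if s = i then C r i else 0) = -(if r = i then B i s else 0) := by
    intro i h r s
    have := congrFun (congrFun (hK i h).2 r) s
    simpa [mulE, Emul] using this
  have e3 : ∀ j : Fin n, ¬ (j:ℕ) < p → ∀ r s : Fin n,
      ((if s = j then B r m2 else 0) + (if s = j then B r l1 else 0)) =
        -((if r = j then C m2 s else 0) - (if r = j then C l1 s else 0)) := by
    intro j h r s
    have := congrFun (congrFun (hK' j h).1 r) s
    simpa [mul_add, sub_mul, mulE, Emul] using this
  have e4 : ∀ j : Fin n, ¬ (j:ℕ) < p → ∀ r s : Fin n,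
      ((if s = m2 then C r j else 0) - (if s = l1 then C r j else 0)) =
        -((if r = m2 then B j s else 0) + (if r = l1 then B j s else 0)) := by
    intro j h r s
    have := congrFun (congrFun (hK' j h).2 r) s
    simpa [mul_sub, add_mul, mulE, Emul] using this
  -- derived vanishing facts for B
  have hBrow : ∀ r s : Fin n, (r:ℕ) < p → s ≠ r → B r s = 0 := by
    intro r s h hs
    have := e2 r h r s
    rw [if_neg hs, if_pos rfl] at this
    linarith
  have hBcol : ∀ r s : Fin n, (s:ℕ) < p → r ≠ s → B r s = 0 := by
    intro r s h hr
    have := e1 s h r s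
    rw [if_pos rfl, if_neg hr] at this
    linarith
  have hBrest : ∀ r s : Fin n, ¬ (r:ℕ) < p → s ≠ m2 → s ≠ l1 → B r s = 0 := by
    intro r s hr h1 h2
    have := e4 r hr m2 s
    rw [if_neg h1, if_neg h2, if_pos rfl, if_neg hm2L] at this
    linarith
  have hBml : ∀ r : Fin n, B r l1 = -(B r m2) := by
    intro r
    by_cases hrm : r = m2
    · have hrl : r ≠ l1 := by rw [hrm]; exact hm2L
      have := e3 l1 hl1p r l1
      simp only [eq_self_iff_true, if_true, if_neg hrl] at this
      linarith
    · have := e3 m2 hm2p r m2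
      simp only [eq_self_iff_true, if_true, if_neg hrm] at this
      linarith
  -- derived vanishing facts for C
  have hCcol : ∀ r s : Fin n, (s:ℕ) < p → r ≠ s → C r s = 0 := by
    intro r s h hr
    have := e2 s h r s
    rw [if_pos rfl, if_neg hr] at this
    linarith
  have hCrow : ∀ r s : Fin n, (r:ℕ) < p → s ≠ r → C r s = 0 := by
    intro r s h hs
    have := e1 r h r s
    rw [if_neg hs, if_pos rfl] at this
    linarith
  have hCrest : ∀ r s : Fin n, ¬ (s:ℕ) < p → r ≠ m2 → r ≠ l1 → C r s = 0 := by
    intro r s hs h1 h2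
    have := e4 s hs r m2
    rw [if_pos rfl, if_neg hm2L, if_neg h1, if_neg h2] at this
    linarith
  have hCml : ∀ s : Fin n, C l1 s = C m2 s := by
    intro s
    by_cases hsm : s = m2
    · have hsl : s ≠ l1 := by rw [hsm]; exact hm2L
      have := e3 l1 hl1p l1 s
      simp only [eq_self_iff_true, if_true, if_neg hsl] at this
      linarith
    · have := e3 m2 hm2p m2 s
      simp only [eq_self_iff_true, if_true, if_neg hsm] at this
      linarith
  refine ⟨fun i => if (i:ℕ) < p then B i i else B i m2, ?_⟩
  ext x y
  rcases x with r | r <;> rcases y with s | s <;>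
    simp only [Matrix.sum_apply, Matrix.smul_apply, smul_eq_mul,
      fromBlocks_apply₁₁, fromBlocks_apply₁₂, fromBlocks_apply₂₁,
      fromBlocks_apply₂₂, Matrix.zero_apply]
  · -- (inl, inl)
    refine (Finset.sum_eq_zero ?_).symm
    intro i _
    by_cases hip : (i:ℕ) < p
    · rw [haf1 i hip]; simp
    · rw [haf2 i hip]; simp
  · -- (inl, inr) : B block
    rw [Finset.sum_eq_single r]
    · by_cases hrp : (r:ℕ) < p
      · rw [haf1 r hrp, if_pos hrp]
        by_cases hsr : s = r
        · subst hsr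
          simp [Matrix.single]
        · rw [hBrow r s hrp hsr]
          simp [Matrix.single, Ne.symm hsr]
      · rw [haf2 r hrp, if_neg hrp]
        by_cases hsm : s = m2
        · subst hsm
          simp [Matrix.single, Ne.symm hm2L]
        · by_cases hsl : s = l1
          · subst hsl
            rw [hBml r]
            simp [Matrix.single, hm2L]
          · rw [hBrest r s hrp hsm hsl]
            simp [Matrix.single, Ne.symm hsm, Ne.symm hsl]
    · intro i _ hir
      by_cases hip : (i:ℕ) < p
      · rw [haf1 i hip]; simp [Matrix.single, hir]
      · rw [haf2 i hip]; simp [Matrix.single, hir]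
    · intro h; exact absurd (Finset.mem_univ r) h
  · -- (inr, inl) : C block
    rw [Finset.sum_eq_single s]
    · by_cases hsp : (s:ℕ) < p
      · rw [haf1 s hsp, if_pos hsp]
        by_cases hrs : r = s
        · subst hrs
          have h := hBCe r r
          rw [if_neg (show ¬ ((r:ℕ) + 1 = n) by omega)] at h
          simp [Matrix.single]
          linarith
        · rw [hCcol r s hsp hrs]
          simp [Matrix.single, Ne.symm hrs]
      · rw [haf2 s hsp, if_neg hsp]
        have hdm2 : ¬ ((m2:ℕ) + 1 = n) := by omega
        by_cases hrm : r = m2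
        · subst hrm
          have h := hBCe s m2
          rw [if_neg hdm2] at h
          rw [fromBlocks_apply₂₁, Matrix.neg_apply, Matrix.add_apply,
            single_apply_same,
            single_apply_of_ne (h := fun hh : l1 = m2 ∧ s = s => hm2L hh.1.symm)]
          linarith
        · by_cases hrl : r = l1
          · subst hrl
            have h := hBCe s m2
            rw [if_neg hdm2] at h
            rw [hCml s, fromBlocks_apply₂₁, Matrix.neg_apply, Matrix.add_apply,
              single_apply_same,
              single_apply_of_ne (h := fun hh : m2 = l1 ∧ s = s => hm2L hh.1)]
            linarith
          · rw [hCrest r s hsp hrm hrl]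
            simp [Matrix.single, Ne.symm hrm, Ne.symm hrl]
    · intro i _ his
      by_cases hip : (i:ℕ) < p
      · rw [haf1 i hip]; simp [Matrix.single, his]
      · rw [haf2 i hip]; simp [Matrix.single, his]
    · intro h; exact absurd (Finset.mem_univ s) h
  · -- (inr, inr)
    refine (Finset.sum_eq_zero ?_).symm
    intro i _
    by_cases hip : (i:ℕ) < p
    · rw [haf1 i hip]; simp
    · rw [haf2 i hip]; simp

end
end
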